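/- arXiv:2504.07607 — 12 statements merged into one kernel-verified Lean document; each statement's English description precedes it below -/
import Mathlib

section
/- Let λ > 0 with μ + λ > L_f and set γ_s = μ − L_f + λ. Fix x, z ∈ E and y, y' ∈ F. Suppose u ∈ X minimizes w ↦ K(w, y, z) + (λ/2)‖w − x‖² over X and u' ∈ X minimizes w ↦ K(w, y', z) + (λ/2)‖w − x‖² over X. Then [K(u, y, z) + (λ/2)‖u − x‖²] − [K(u', y', z) + (λ/2)‖u' − x‖²] ≥ ⟨y − y', Au − b⟩ + (γ_s/2)·‖u − u'‖². -/
open MeasureTheory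
open scoped RealInnerProductSpace

lemma comb_norm {E : Type*} [NormedAddCommGroup E] [InnerProductSpace ℝ E]
    (p q : E) (t : ℝ) :
    ‖t•p + (1-t)•q‖^2 = t*‖p‖^2 + (1-t)*‖q‖^2 - t*(1-t)*‖p-q‖^2 := by
  simp only [← real_inner_self_eq_norm_sq, inner_add_add_self, inner_sub_sub_self,
    real_inner_smul_left, real_inner_smul_right]
  ring

lemma line_deriv {E : Type*} [NormedAddCommGroup E] [InnerProductSpace ℝ E]
    [CompleteSpace E]
    (f : E → ℝ) (f' : E → E) (hf : ∀ x, HasGradientAt f (f' x) x)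
    (v d : E) (t : ℝ) :
    HasDerivAt (fun s : ℝ => f (v + s • d)) ⟪f' (v + t • d), d⟫ t := by
  have hline : HasDerivAt (fun s : ℝ => v + s • d) d t := by
    simpa using ((hasDerivAt_id t).smul_const d).const_add v
  have := (hf (v + t • d)).hasFDerivAt.comp_hasDerivAt t hline
  simpa [InnerProductSpace.toDual_apply_apply, Function.comp_def] using this

lemma descent_lower {E : Type*} [NormedAddCommGroup E] [InnerProductSpace ℝ E]
    [CompleteSpace E]
    (f : E → ℝ) (f' : E → E) (Lf : ℝ)
    (hf : ∀ x, HasGradientAt f (f' x) x)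
    (hlip : ∀ u v, ‖f' u - f' v‖ ≤ Lf * ‖u - v‖)
    (v w : E) :
    f v + ⟪f' v, w - v⟫ - Lf/2 * ‖w - v‖^2 ≤ f w := by
  set d := w - v with hd
  set χ : ℝ → ℝ := fun t => f (v + t • d) - t * ⟪f' v, d⟫ + Lf * ‖d‖^2 / 2 * t^2 with hχ
  set χ' : ℝ → ℝ := fun t => ⟪f' (v + t • d), d⟫ - ⟪f' v, d⟫ + Lf * ‖d‖^2 * t with hχ'
  have hder : ∀ t : ℝ, HasDerivAt χ (χ' t) t := by
    intro t
    have h1 := line_deriv f f' hf v d t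
    have h2 : HasDerivAt (fun s : ℝ => s * ⟪f' v, d⟫) ⟪f' v, d⟫ t := by
      simpa using (hasDerivAt_id t).mul_const (⟪f' v, d⟫)
    have h3 : HasDerivAt (fun s : ℝ => Lf * ‖d‖^2 / 2 * s^2) (Lf * ‖d‖^2 * t) t := by
      have := (hasDerivAt_pow 2 t).const_mul (Lf * ‖d‖^2 / 2)
      exact this.congr_deriv (by norm_num; ring)
    exact (h1.sub h2).add h3
  have hmvt := exists_hasDerivAt_eq_slope χ χ' (by norm_num : (0:ℝ) < 1)
    (fun s _ => (hder s).continuousAt.continuousWithinAt) (fun s _ => hder s)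
  obtain ⟨c, hc, heq⟩ := hmvt
  have hcpos : 0 < c := hc.1
  have hnn : 0 ≤ χ' c := by
    have hip : -(‖f' (v + c • d) - f' v‖ * ‖d‖) ≤ ⟪f' (v + c • d) - f' v, d⟫ :=
      neg_le_of_abs_le (abs_real_inner_le_norm _ _)
    have hL : ‖f' (v + c • d) - f' v‖ * ‖d‖ ≤ Lf * (c * ‖d‖) * ‖d‖ := by
      have := hlip (v + c • d) v
      have h2 : ‖v + c • d - v‖ = c * ‖d‖ := by
        simp [norm_smul, abs_of_pos hcpos]
      rw [h2] at this
      exact mul_le_mul_of_nonneg_right this (norm_nonneg d)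
    have : ⟪f' (v + c • d) - f' v, d⟫ ≥ -(Lf * ‖d‖^2 * c) := by
      nlinarith [hip, hL]
    simp only [hχ', inner_sub_left] at *
    linarith
  have hchi : χ 0 ≤ χ 1 := by
    have h10 : χ 1 - χ 0 = χ' c := by rw [heq]; ring
    linarith [hnn, h10.symm.le]
  simp only [hχ, one_smul, zero_smul, add_zero, hd] at hchi
  have : v + (w - v) = w := by abel
  rw [this] at hchi
  nlinarith [hchi]

lemma f_comb {E : Type*} [NormedAddCommGroup E] [InnerProductSpace ℝ E]
    [CompleteSpace E]
    (f : E → ℝ) (f' : E → E) (Lf : ℝ)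
    (hf : ∀ x, HasGradientAt f (f' x) x)
    (hlip : ∀ u v, ‖f' u - f' v‖ ≤ Lf * ‖u - v‖)
    (a b : E) {t : ℝ} (ht0 : 0 ≤ t) (ht1 : t ≤ 1) :
    f (t•a + (1-t)•b) ≤ t * f a + (1-t) * f b + Lf/2 * (t*(1-t)) * ‖a-b‖^2 := by
  set w := t•a + (1-t)•b with hw
  have ha : a - w = (1-t) • (a - b) := by rw [hw]; module
  have hb : b - w = (-t) • (a - b) := by rw [hw]; module
  have h1 := descent_lower f f' Lf hf hlip w a
  have h2 := descent_lower f f' Lf hf hlip w b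
  rw [ha] at h1; rw [hb] at h2
  rw [norm_smul, real_inner_smul_right] at h1 h2
  have hniA : (‖(1-t)‖ * ‖a-b‖)^2 = (1-t)^2 * ‖a-b‖^2 := by
    rw [Real.norm_eq_abs, mul_pow, sq_abs]
  have hniB : (‖(-t)‖ * ‖a-b‖)^2 = t^2 * ‖a-b‖^2 := by
    rw [Real.norm_eq_abs, mul_pow, sq_abs]; ring_nf
  rw [hniA] at h1; rw [hniB] at h2
  have k1 := mul_le_mul_of_nonneg_left h1 ht0
  have k2 := mul_le_mul_of_nonneg_left h2 (by linarith : (0:ℝ) ≤ 1 - t)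
  nlinarith [k1, k2]

theorem stmt_3
    {E F : Type*}
    [NormedAddCommGroup E] [InnerProductSpace ℝ E] [FiniteDimensional ℝ E]
    [NormedAddCommGroup F] [InnerProductSpace ℝ F] [FiniteDimensional ℝ F]
    (A : E →L[ℝ] F) (b : F) (X : Set E)
    (hXne : X.Nonempty) (hXcl : IsClosed X) (hXcv : Convex ℝ X)
    (f : E → ℝ) (f' : E → E) (Lf : ℝ) (hLf : 0 ≤ Lf)
    (hf : ∀ x, HasGradientAt f (f' x) x)
    (hlip : ∀ u v, ‖f' u - f' v‖ ≤ Lf * ‖u - v‖)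
    (ρ μ : ℝ) (hρ : 0 ≤ ρ) (hμ : 0 < μ)
    (K : E → F → E → ℝ)
    (hK : ∀ x y z, K x y z =
      f x + ⟪A x - b, y⟫ + (ρ/2) * ‖A x - b‖^2 + (μ/2) * ‖x - z‖^2)
    (lam : ℝ) (hlam : 0 < lam) (hml : Lf < μ + lam)
    (γs : ℝ) (hγs : γs = μ - Lf + lam)
    (x z : E) (y y' : F) (u u' : E)
    (hu : u ∈ X ∧ ∀ w ∈ X,
      K u y z + (lam/2) * ‖u - x‖^2 ≤ K w y z + (lam/2) * ‖w - x‖^2)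
    (hu' : u' ∈ X ∧ ∀ w ∈ X,
      K u' y' z + (lam/2) * ‖u' - x‖^2 ≤ K w y' z + (lam/2) * ‖w - x‖^2) :
    (K u y z + (lam/2) * ‖u - x‖^2) - (K u' y' z + (lam/2) * ‖u' - x‖^2)
      ≥ ⟪y - y', A u - b⟫ + (γs/2) * ‖u - u'‖^2 := by
  set g : E → ℝ := fun w => K w y' z + (lam/2) * ‖w - x‖^2 with hg
  -- Step 1: combination bound for g on the segment [u', u]
  have hcomb : ∀ t : ℝ, 0 ≤ t → t ≤ 1 →
      g (t•u + (1-t)•u') ≤ t * g u + (1-t) * g u'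
        - (μ + lam - Lf)/2 * (t*(1-t)) * ‖u-u'‖^2 := by
    intro t ht0 ht1
    set w := t•u + (1-t)•u' with hw
    have hAw : A w - b = t•(A u - b) + (1-t)•(A u' - b) := by
      have h1 : A w = t • A u + (1-t) • A u' := by rw [hw]; simp
      rw [h1]; module
    have hf1 := f_comb f f' Lf hf hlip u u' ht0 ht1
    have hlin : ⟪A w - b, y'⟫ = t * ⟪A u - b, y'⟫ + (1-t) * ⟪A u' - b, y'⟫ := by
      rw [hAw, inner_add_left, real_inner_smul_left, real_inner_smul_left]
    have hq1 : ‖A w - b‖^2 = t*‖A u - b‖^2 + (1-t)*‖A u' - b‖^2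
        - t*(1-t)*‖(A u - b) - (A u' - b)‖^2 := by
      rw [hAw, comb_norm]
    have hq2 : ‖w - z‖^2 = t*‖u - z‖^2 + (1-t)*‖u' - z‖^2 - t*(1-t)*‖u - u'‖^2 := by
      have h : w - z = t•(u - z) + (1-t)•(u' - z) := by rw [hw]; module
      have h2 : (u - z) - (u' - z) = u - u' := by abel
      rw [h, comb_norm, h2]
    have hq3 : ‖w - x‖^2 = t*‖u - x‖^2 + (1-t)*‖u' - x‖^2 - t*(1-t)*‖u - u'‖^2 := by
      have h : w - x = t•(u - x) + (1-t)•(u' - x) := by rw [hw]; module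
      have h2 : (u - x) - (u' - x) = u - u' := by abel
      rw [h, comb_norm, h2]
    have hρterm : 0 ≤ ρ/2 * (t*(1-t)*‖(A u - b) - (A u' - b)‖^2) := by
      have := sq_nonneg ‖(A u - b) - (A u' - b)‖
      have ht' : 0 ≤ t * (1-t) := mul_nonneg ht0 (by linarith)
      positivity
    have expand : t * g u + (1-t) * g u'
        - (μ + lam - Lf)/2 * (t*(1-t)) * ‖u-u'‖^2
      = (t * f u + (1-t) * f u' + Lf/2 * (t*(1-t)) * ‖u-u'‖^2)
        + ⟪A w - b, y'⟫
        + (ρ/2 * ‖A w - b‖^2 + ρ/2 * (t*(1-t)*‖(A u - b) - (A u' - b)‖^2))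
        + μ/2 * ‖w - z‖^2 + lam/2 * ‖w - x‖^2 := by
      simp only [hg, hK]
      rw [hlin, hq1, hq2, hq3]
      ring
    have lhs_eq : g w = f w + ⟪A w - b, y'⟫ + ρ/2 * ‖A w - b‖^2
        + μ/2 * ‖w - z‖^2 + lam/2 * ‖w - x‖^2 := by
      simp only [hg, hK]
    rw [lhs_eq, expand]
    linarith [hf1, hρterm]
  -- Step 2: for t ∈ (0,1), divide by t
  have hstep : ∀ t : ℝ, 0 < t → t < 1 →
      (μ + lam - Lf)/2 * ((1-t) * ‖u-u'‖^2) ≤ g u - g u' := by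
    intro t ht0 ht1
    have hmem : t•u + (1-t)•u' ∈ X :=
      hXcv hu.1 hu'.1 ht0.le (by linarith) (by ring)
    have hmin : g u' ≤ g (t•u + (1-t)•u') := hu'.2 _ hmem
    have hc := hcomb t ht0.le ht1.le
    generalize hG1 : g u = G1 at hmin hc ⊢
    generalize hG2 : g u' = G2 at hmin hc ⊢
    generalize hG3 : g (t•u + (1-t)•u') = G3 at hmin hc
    have key : t * ((μ + lam - Lf)/2 * ((1-t) * ‖u-u'‖^2)) ≤ t * (G1 - G2) := by
      nlinarith [hmin, hc]
    exact le_of_mul_le_mul_left key ht0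
  -- Step 3: take t → 0⁺
  have hlim : (μ + lam - Lf)/2 * ‖u-u'‖^2 ≤ g u - g u' := by
    have htend : Filter.Tendsto (fun t : ℝ => (μ + lam - Lf)/2 * ((1-t) * ‖u-u'‖^2))
        (nhdsWithin 0 (Set.Ioi 0)) (nhds ((μ + lam - Lf)/2 * ‖u-u'‖^2)) := by
      have h1 : Filter.Tendsto (fun t : ℝ => 1 - t) (nhds 0) (nhds 1) := by
        have := tendsto_const_nhds (α := ℝ) (x := (1:ℝ)) (f := nhds (0:ℝ))
        simpa using this.sub Filter.tendsto_id
      have hcont := (h1.mul_const (‖u-u'‖^2)).const_mul ((μ + lam - Lf)/2)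
      simpa using hcont.mono_left nhdsWithin_le_nhds
    refine le_of_tendsto htend ?_
    filter_upwards [Ioo_mem_nhdsGT_of_mem (Set.mem_Ico.mpr ⟨le_refl 0, one_pos⟩)] with t ht
    exact hstep t ht.1 ht.2
  -- Step 4: assemble
  have hydiff : K u y z - K u y' z = ⟪y - y', A u - b⟫ := by
    have h : ⟪y - y', A u - b⟫ = ⟪A u - b, y⟫ - ⟪A u - b, y'⟫ := by
      rw [real_inner_comm, inner_sub_right]
    rw [hK, hK, h]
    ring
  have hγ : γs = μ + lam - Lf := by rw [hγs]; ring
  simp only [hg] at hlim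
  rw [hγ]
  linarith [hlim, hydiff]
end

section
/- Let λ > 0 with μ + λ > L_f and set γ_s = μ − L_f + λ. Fix x, z, z' ∈ E and y ∈ F. Suppose u ∈ X minimizes w ↦ K(w, y, z) + (λ/2)‖w − x‖² over X and u'' ∈ X minimizes w ↦ K(w, y, z') + (λ/2)‖w − x‖² over X. Then [K(u, y, z) + (λ/2)‖u − x‖²] − [K(u'', y, z') + (λ/2)‖u'' − x‖²] ≥ (μ/2)·⟨z' − z, 2u − z' − z⟩ + (γ_s/2)·‖u'' − u‖². -/
open MeasureTheory
open scoped RealInnerProductSpace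

private lemma sq_expand_aux {E : Type*} [NormedAddCommGroup E] [InnerProductSpace ℝ E]
    (v c d : E) (t : ℝ) :
    ‖v + t • d - c‖^2 = ‖v - c‖^2 + 2*t*⟪v - c, d⟫ + t^2*‖d‖^2 := by
  have h : v + t • d - c = (v - c) + t • d := by abel
  rw [h, norm_add_sq_real, real_inner_smul_right, norm_smul]
  simp [Real.norm_eq_abs, mul_pow, sq_abs]
  ring

set_option maxHeartbeats 1000000

theorem stmt_4
    {E F : Type*}
    [NormedAddCommGroup E] [InnerProductSpace ℝ E] [FiniteDimensional ℝ E]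
    [NormedAddCommGroup F] [InnerProductSpace ℝ F] [FiniteDimensional ℝ F]
    (A : E →L[ℝ] F) (b : F) (X : Set E)
    (hXne : X.Nonempty) (hXcl : IsClosed X) (hXcv : Convex ℝ X)
    (f : E → ℝ) (f' : E → E) (Lf : ℝ) (hLf : 0 ≤ Lf)
    (hf : ∀ x, HasGradientAt f (f' x) x)
    (hlip : ∀ u v, ‖f' u - f' v‖ ≤ Lf * ‖u - v‖)
    (ρ μ : ℝ) (hρ : 0 ≤ ρ) (hμ : 0 < μ)
    (K : E → F → E → ℝ)
    (hK : ∀ x y z, K x y z =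
      f x + ⟪A x - b, y⟫ + (ρ/2) * ‖A x - b‖^2 + (μ/2) * ‖x - z‖^2)
    (lam : ℝ) (hlam : 0 < lam) (hml : Lf < μ + lam)
    (γs : ℝ) (hγs : γs = μ - Lf + lam)
    (x z z' : E) (y : F) (u u'' : E)
    (hu : u ∈ X ∧ ∀ w ∈ X,
      K u y z + (lam/2) * ‖u - x‖^2 ≤ K w y z + (lam/2) * ‖w - x‖^2)
    (hu'' : u'' ∈ X ∧ ∀ w ∈ X,
      K u'' y z' + (lam/2) * ‖u'' - x‖^2 ≤ K w y z' + (lam/2) * ‖w - x‖^2) :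
    (K u y z + (lam/2) * ‖u - x‖^2) - (K u'' y z' + (lam/2) * ‖u'' - x‖^2)
      ≥ (μ/2) * ⟪z' - z, (2:ℝ) • u - z' - z⟫ + (γs/2) * ‖u'' - u‖^2 := by
  set d : E := u - u'' with hd
  set φ : E → ℝ := fun w => K w y z' + (lam/2) * ‖w - x‖^2 with hφ
  set wt : ℝ → E := fun t => u'' + t • d with hwt
  set a0 : ℝ := f u'' + ⟪A u'' - b, y⟫ + (ρ/2)*‖A u'' - b‖^2 + (μ/2)*‖u'' - z'‖^2
      + (lam/2)*‖u'' - x‖^2 with ha0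
  set a1 : ℝ := ⟪A d, y⟫ + ρ*⟪A u'' - b, A d⟫ + μ*⟪u'' - z', d⟫ + lam*⟪u'' - x, d⟫ with ha1
  set c2 : ℝ := ρ*‖A d‖^2 + Lf*‖d‖^2 with hc2
  set ψ : ℝ → ℝ := fun t => f (wt t) - f u'' + a0 + a1*t + c2/2*t^2 with hψ
  clear_value ψ c2 a1 a0 wt φ d
  have hγpos : 0 < γs := by rw [hγs]; linarith
  -- expansion identity
  have hexp : ∀ t : ℝ, φ (wt t) = ψ t + (γs/2)*t^2*‖d‖^2 := by
    intro t
    have hA : A (wt t) - b = (A u'' - b) + t • (A d) := by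
      simp [hwt, map_add, A.map_smul]; abel
    have h1 : ⟪A (wt t) - b, y⟫ = ⟪A u'' - b, y⟫ + t * ⟪A d, y⟫ := by
      rw [hA, inner_add_left, real_inner_smul_left]
    have h2 : ‖A (wt t) - b‖^2 = ‖A u'' - b‖^2 + 2*t*⟪A u'' - b, A d⟫ + t^2*‖A d‖^2 := by
      rw [hA]
      have h' : (A u'' - b) + t • (A d) = (A u'' - b + b) + t • A d - b := by abel
      rw [h', sq_expand_aux (A u'' - b + b) b (A d) t, add_sub_cancel_right]
    have h3 : ‖wt t - z'‖^2 = ‖u'' - z'‖^2 + 2*t*⟪u'' - z', d⟫ + t^2*‖d‖^2 := by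
      simp only [hwt]; exact sq_expand_aux u'' z' d t
    have h4 : ‖wt t - x‖^2 = ‖u'' - x‖^2 + 2*t*⟪u'' - x, d⟫ + t^2*‖d‖^2 := by
      simp only [hwt]; exact sq_expand_aux u'' x d t
    rw [hφ]
    simp only [hK, hψ, h1, h2, h3, h4, ha0, ha1, hc2, hγs]
    ring
  -- derivative of ψ
  have hwderiv : ∀ t : ℝ, HasDerivAt wt d t := by
    intro t
    have h1 : HasDerivAt (fun s : ℝ => s • d) ((1:ℝ) • d) t := (hasDerivAt_id t).smul_const d
    simpa [hwt, one_smul] using h1.const_add u''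
  have hderiv : ∀ t : ℝ, HasDerivAt ψ (⟪f' (wt t), d⟫ + (a1 + c2*t)) t := by
    intro t
    have hfc : HasDerivAt (fun s => f (wt s)) (⟪f' (wt t), d⟫) t := by
      have := ((hf (wt t)).hasFDerivAt.comp_hasDerivAt t (hwderiv t))
      simpa [InnerProductSpace.toDual_apply_apply, Function.comp_def] using this
    have hpoly : HasDerivAt (fun s : ℝ => -f u'' + a0 + a1*s + c2/2*s^2) (a1 + c2*t) t := by
      have h1 : HasDerivAt (fun s : ℝ => a1*s) a1 t := by
        simpa using (hasDerivAt_id t).const_mul a1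
      have h2 : HasDerivAt (fun s : ℝ => c2/2*s^2) (c2*t) t := by
        have := (hasDerivAt_pow 2 t).const_mul (c2/2)
        simpa [pow_one] using this.congr_deriv (by ring)
      exact ((h1.const_add (-f u'' + a0)).add h2)
    have := hfc.add hpoly
    have heq : ψ = fun s => f (wt s) + (-f u'' + a0 + a1*s + c2/2*s^2) := by
      funext s; rw [hψ]; ring
    rw [heq]
    exact this
  have hdiff : Differentiable ℝ ψ := fun t => (hderiv t).differentiableAt
  have hderiv_eq : ∀ t : ℝ, deriv ψ t = ⟪f' (wt t), d⟫ + (a1 + c2*t) :=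
    fun t => (hderiv t).deriv
  -- monotone derivative
  have hmono : Monotone (deriv ψ) := by
    intro s t hst
    rw [hderiv_eq, hderiv_eq]
    have hws : wt s - wt t = (s - t) • d := by simp only [hwt]; module
    have hb1 : ⟪f' (wt s) - f' (wt t), d⟫ ≤ ‖f' (wt s) - f' (wt t)‖ * ‖d‖ :=
      real_inner_le_norm _ _
    have hb2 : ‖f' (wt s) - f' (wt t)‖ ≤ Lf * ((t - s) * ‖d‖) := by
      have := hlip (wt s) (wt t)
      rw [hws] at this
      rw [norm_smul, Real.norm_eq_abs, abs_of_nonpos (by linarith)] at this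
      linarith [this]
    have hinner : ⟪f' (wt s), d⟫ - ⟪f' (wt t), d⟫ ≤ Lf * (t - s) * ‖d‖^2 := by
      calc ⟪f' (wt s), d⟫ - ⟪f' (wt t), d⟫ = ⟪f' (wt s) - f' (wt t), d⟫ := by
            rw [inner_sub_left]
        _ ≤ ‖f' (wt s) - f' (wt t)‖ * ‖d‖ := real_inner_le_norm _ _
        _ ≤ Lf * ((t - s) * ‖d‖) * ‖d‖ :=
            mul_le_mul_of_nonneg_right hb2 (norm_nonneg d)
        _ = Lf * (t - s) * ‖d‖^2 := by ring
    have hρA : 0 ≤ ρ * ‖A d‖^2 := mul_nonneg hρ (sq_nonneg _)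
    have : c2 * (t - s) ≥ Lf * (t - s) * ‖d‖^2 := by
      rw [hc2]
      nlinarith [sub_nonneg.mpr hst]
    linarith
  have hconv : ConvexOn ℝ Set.univ ψ := hmono.convexOn_univ_of_deriv hdiff
  -- endpoint values
  have hwt0 : wt 0 = u'' := by simp [hwt]
  have hwt1 : wt 1 = u := by simp [hwt, hd]
  have hψ0 : φ u'' = ψ 0 := by have := hexp 0; rw [hwt0] at this; simpa using this
  have hψ1 : φ u = ψ 1 + (γs/2)*‖d‖^2 := by
    have := hexp 1; rw [hwt1] at this; simpa using this
  set C : ℝ := (γs/2)*‖d‖^2 with hC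
  clear_value C
  have hCnn : 0 ≤ C := by rw [hC]; exact mul_nonneg (by linarith) (sq_nonneg _)
  -- key strong-convexity growth inequality
  have hkey : ∀ t : ℝ, 0 < t → t ≤ 1 → φ u'' + C - φ u ≤ t * C := by
    intro t ht0 ht1
    have hmem : wt t ∈ X := by
      have hseg : wt t = (1 - t) • u'' + t • u := by
        rw [hwt, hd]; module
      rw [hseg]
      exact hXcv hu''.1 hu.1 (by linarith) (by linarith) (by ring)
    have hopt : φ u'' ≤ φ (wt t) := by simp only [hφ]; exact hu''.2 (wt t) hmem
    have hcv := hconv.2 (Set.mem_univ (0:ℝ)) (Set.mem_univ (1:ℝ))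
      (show (0:ℝ) ≤ 1 - t by linarith) (le_of_lt ht0) (by ring)
    simp only [smul_eq_mul, mul_zero, mul_one, zero_add] at hcv
    -- hcv : ψ t ≤ (1 - t) * ψ 0 + t * ψ 1
    have h1 : φ u'' ≤ ψ t + (γs/2)*t^2*‖d‖^2 := by rw [← hexp t]; exact hopt
    have h2 : (γs/2)*t^2*‖d‖^2 = t^2 * C := by rw [hC]; ring
    have h3 : ψ 1 = φ u - C := by rw [hψ1]; ring
    rw [← hψ0] at hcv
    rw [h3] at hcv
    have h4 : φ u'' ≤ (1 - t) * φ u'' + t * (φ u - C) + t^2 * C := by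
      rw [← h2]; linarith only [h1, hcv]
    have h5 : t * (φ u'' + C - φ u) ≤ t * (t * C) := by nlinarith
    exact le_of_mul_le_mul_left (by linarith [h5]) ht0
  have hmain : φ u'' + C ≤ φ u := by
    by_contra h
    push_neg at h
    set ε : ℝ := φ u'' + C - φ u with hε
    have hεpos : 0 < ε := by rw [hε]; linarith
    have htpos : 0 < min 1 (ε / (2*(C+1))) := by
      apply lt_min one_pos
      positivity
    have := hkey _ htpos (min_le_left _ _)
    have hle : min 1 (ε / (2*(C+1))) * C ≤ (ε / (2*(C+1))) * C :=
      mul_le_mul_of_nonneg_right (min_le_right _ _) hCnn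
    have hlt : (ε / (2*(C+1))) * C < ε := by
      rw [div_mul_eq_mul_div, div_lt_iff₀ (by linarith)]
      nlinarith
    linarith
  -- reduce the target
  have hinnerid : ⟪z' - z, (2:ℝ) • u - z' - z⟫ = ‖u - z‖^2 - ‖u - z'‖^2 := by
    simp only [← real_inner_self_eq_norm_sq, inner_sub_left, inner_sub_right,
      inner_smul_right, real_inner_comm u z, real_inner_comm u z']
    ring_nf
    rw [real_inner_comm z z']
    ring
  have hKz : K u y z = K u y z' + (μ/2) * (‖u - z‖^2 - ‖u - z'‖^2) := by
    rw [hK, hK]; ring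
  have hnorm : ‖u'' - u‖^2 = ‖d‖^2 := by rw [hd, ← norm_neg]; congr 1; abel
  have hfin : φ u - φ u'' ≥ (γs/2) * ‖u'' - u‖^2 := by
    rw [hnorm]; linarith [hmain]
  rw [hinnerid, hnorm]
  have : K u y z + (lam/2) * ‖u - x‖^2 = φ u + (μ/2) * (‖u - z‖^2 - ‖u - z'‖^2) := by
    rw [hφ]; simp only []; rw [hKz]; ring
  rw [this]
  have hφu'' : K u'' y z' + (lam/2) * ‖u'' - x‖^2 = φ u'' := by simp only [hφ]
  rw [hφu'']
  linarith [hfin]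
end

section
/- Fix y, y' ∈ F and z, z' ∈ E. Suppose x₀ ∈ X minimizes x ↦ K(x, y, z) over X, x' ∈ X minimizes x ↦ K(x, y', z) over X, and x'' ∈ X minimizes x ↦ K(x, y', z') over X. Then K(x'', y', z') − K(x₀, y, z) ≥ ⟨y' − y, Ax' − b⟩ + (μ/2)·⟨z' − z, z' + z − 2x''⟩. -/
open scoped RealInnerProductSpace

/-!
Changing the multiplier from `y` to `y'` at a fixed point `x` changes `K` by exactly
`⟪y' - y, A x - b⟫`, and changing the prox-centre from `z` to `z'` changes it by exactly
`(μ/2) ⟪z' - z, z' + z - 2x⟫`. Chain `K x₀ y z ≤ K x' y z` and `K x' y' z ≤ K x'' y' z`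
(minimality of `x₀` and `x'`) through these two exact identities.
-/

section ProxAugLagrangian

variable {E F : Type*}
  [NormedAddCommGroup E] [InnerProductSpace ℝ E]
  [NormedAddCommGroup F] [InnerProductSpace ℝ F]

theorem norm_sub_sq_sub_norm_sub_sq (x z z' : E) :
    ‖x - z'‖ ^ 2 - ‖x - z‖ ^ 2 = ⟪z' - z, z' + z - (2:ℝ) • x⟫ := by
  simp only [← real_inner_self_eq_norm_sq, inner_sub_left, inner_sub_right, inner_add_right,
    inner_smul_right, real_inner_comm x z, real_inner_comm x z', real_inner_comm z z']
  ring

noncomputable def proxAugLagrangian (f : E → ℝ) (A : E →L[ℝ] F) (b : F) (ρ μ : ℝ)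
    (x : E) (y : F) (z : E) : ℝ :=
  f x + ⟪A x - b, y⟫ + (ρ/2) * ‖A x - b‖ ^ 2 + (μ/2) * ‖x - z‖ ^ 2

variable (f : E → ℝ) (A : E →L[ℝ] F) (b : F) (ρ μ : ℝ)

theorem proxAugLagrangian_sub_of_multiplier (x : E) (y y' : F) (z : E) :
    proxAugLagrangian f A b ρ μ x y' z - proxAugLagrangian f A b ρ μ x y z
      = ⟪y' - y, A x - b⟫ := by
  rw [real_inner_comm, inner_sub_right]
  simp only [proxAugLagrangian]
  ring

theorem proxAugLagrangian_sub_of_center (x : E) (y : F) (z z' : E) :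
    proxAugLagrangian f A b ρ μ x y z' - proxAugLagrangian f A b ρ μ x y z
      = (μ/2) * ⟪z' - z, z' + z - (2:ℝ) • x⟫ := by
  rw [← norm_sub_sq_sub_norm_sub_sq]
  simp only [proxAugLagrangian]
  ring

end ProxAugLagrangian

theorem stmt_5_general
    {E F : Type*}
    [NormedAddCommGroup E] [InnerProductSpace ℝ E]
    [NormedAddCommGroup F] [InnerProductSpace ℝ F]
    (A : E →L[ℝ] F) (b : F) (X : Set E)
    (f : E → ℝ)
    (ρ μ : ℝ)
    (K : E → F → E → ℝ)
    (hK : ∀ x y z, K x y z =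
      f x + ⟪A x - b, y⟫ + (ρ/2) * ‖A x - b‖^2 + (μ/2) * ‖x - z‖^2)
    (y y' : F) (z z' : E) (x₀ x' x'' : E)
    (hx₀ : x₀ ∈ X ∧ ∀ w ∈ X, K x₀ y z ≤ K w y z)
    (hx' : x' ∈ X ∧ ∀ w ∈ X, K x' y' z ≤ K w y' z)
    (hx'' : x'' ∈ X ∧ ∀ w ∈ X, K x'' y' z' ≤ K w y' z') :
    K x'' y' z' - K x₀ y z
      ≥ ⟪y' - y, A x' - b⟫ + (μ/2) * ⟪z' - z, z' + z - (2:ℝ) • x''⟫ := by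
  obtain rfl : K = proxAugLagrangian f A b ρ μ := by
    funext x y z
    exact hK x y z
  have hmin₀ := hx₀.2 x' hx'.1
  have hmin' := hx'.2 x'' hx''.1
  have hmultiplier := proxAugLagrangian_sub_of_multiplier f A b ρ μ x' y y' z
  have hcenter := proxAugLagrangian_sub_of_center f A b ρ μ x'' y' z z'
  linarith

theorem stmt_5
    {E F : Type*}
    [NormedAddCommGroup E] [InnerProductSpace ℝ E] [FiniteDimensional ℝ E]
    [NormedAddCommGroup F] [InnerProductSpace ℝ F] [FiniteDimensional ℝ F]
    (A : E →L[ℝ] F) (b : F) (X : Set E)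
    (hXne : X.Nonempty) (hXcl : IsClosed X) (hXcv : Convex ℝ X)
    (f : E → ℝ) (f' : E → E) (Lf : ℝ) (hLf : 0 ≤ Lf)
    (hf : ∀ x, HasGradientAt f (f' x) x)
    (hlip : ∀ u v, ‖f' u - f' v‖ ≤ Lf * ‖u - v‖)
    (ρ μ : ℝ) (hρ : 0 ≤ ρ) (hμ : 0 < μ)
    (K : E → F → E → ℝ)
    (hK : ∀ x y z, K x y z =
      f x + ⟪A x - b, y⟫ + (ρ/2) * ‖A x - b‖^2 + (μ/2) * ‖x - z‖^2)
    (y y' : F) (z z' : E) (x₀ x' x'' : E)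
    (hx₀ : x₀ ∈ X ∧ ∀ w ∈ X, K x₀ y z ≤ K w y z)
    (hx' : x' ∈ X ∧ ∀ w ∈ X, K x' y' z ≤ K w y' z)
    (hx'' : x'' ∈ X ∧ ∀ w ∈ X, K x'' y' z' ≤ K w y' z') :
    K x'' y' z' - K x₀ y z
      ≥ ⟪y' - y, A x' - b⟫ + (μ/2) * ⟪z' - z, z' + z - (2:ℝ) • x''⟫ :=
  stmt_5_general A b X f ρ μ K hK y y' z z' x₀ x' x'' hx₀ hx' hx''
end

section
/- Assume μ > L_f and that the feasible set S = {x ∈ X : Ax = b} is nonempty. Fix z, z' ∈ E, let x̄ ∈ S minimize x ↦ f(x) + (μ/2)‖x − z‖² over S, and let x̄' ∈ S minimize x ↦ f(x) + (μ/2)‖x − z'‖² over S. Then [f(x̄') + (μ/2)‖x̄' − z'‖²] − [f(x̄) + (μ/2)‖x̄ − z‖²] ≤ μ·⟨z' − z, z − x̄⟩ + (μ²/(2(μ − L_f)))·‖z − z'‖². -/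
/-!
Since `x̄` is feasible and `x̄'` minimizes the `z'`-objective, the left-hand side is at most the
change of the proximal term at the fixed point `x̄` when the centre moves from `z` to `z'`. Expanding
`‖x̄ - z'‖²` around `z`, that change is exactly `μ ⟪z' - z, z - x̄⟫ + (μ/2) ‖z - z'‖²`, and
`μ/2 ≤ μ²/(2(μ - L_f))` because `0 ≤ L_f < μ`.
-/

open scoped RealInnerProductSpace

section

variable {E : Type*} [NormedAddCommGroup E] [InnerProductSpace ℝ E]

lemma norm_sub_sq_eq_of_recenter (x z z' : E) :
    ‖x - z'‖ ^ 2 = ‖x - z‖ ^ 2 + 2 * ⟪z' - z, z - x⟫ + ‖z - z'‖ ^ 2 := by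
  have hsplit : x - z' = (x - z) + (z - z') := by abel
  have hinner : ⟪z' - z, z - x⟫ = ⟪x - z, z - z'⟫ := by
    rw [← neg_sub z z', ← neg_sub x z, inner_neg_neg, real_inner_comm]
  rw [hsplit, norm_add_sq_real, hinner]

lemma prox_objective_recenter (f : E → ℝ) (μ : ℝ) (x z z' : E) :
    f x + μ / 2 * ‖x - z'‖ ^ 2
      = f x + μ / 2 * ‖x - z‖ ^ 2 + μ * ⟪z' - z, z - x⟫ + μ / 2 * ‖z - z'‖ ^ 2 := by
  rw [norm_sub_sq_eq_of_recenter x z z']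
  ring

end

lemma half_le_sq_div_two_mul_sub {μ L : ℝ} (hL : 0 ≤ L) (hμ : 0 < μ) (hLμ : L < μ) :
    μ / 2 ≤ μ ^ 2 / (2 * (μ - L)) := by
  rw [div_le_div_iff₀ two_pos (by linarith)]
  nlinarith

theorem stmt_6_general
    {E F : Type*}
    [NormedAddCommGroup E] [InnerProductSpace ℝ E]
    [NormedAddCommGroup F] [InnerProductSpace ℝ F]
    (A : E →L[ℝ] F) (b : F) (X : Set E)
    (f : E → ℝ) (Lf : ℝ) (hLf : 0 ≤ Lf)
    (μ : ℝ) (hμ : 0 < μ)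
    (hμLf : Lf < μ)
    (z z' : E) (xbar xbar' : E)
    (hxbar : (xbar ∈ X ∧ A xbar = b) ∧ ∀ w, w ∈ X → A w = b →
      f xbar + (μ/2) * ‖xbar - z‖^2 ≤ f w + (μ/2) * ‖w - z‖^2)
    (hxbar' : (xbar' ∈ X ∧ A xbar' = b) ∧ ∀ w, w ∈ X → A w = b →
      f xbar' + (μ/2) * ‖xbar' - z'‖^2 ≤ f w + (μ/2) * ‖w - z'‖^2) :
    (f xbar' + (μ/2) * ‖xbar' - z'‖^2) - (f xbar + (μ/2) * ‖xbar - z‖^2)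
      ≤ μ * ⟪z' - z, z - xbar⟫ + (μ^2/(2*(μ - Lf))) * ‖z - z'‖^2 := by
  obtain ⟨⟨hxbarX, hxbarA⟩, -⟩ := hxbar
  calc (f xbar' + (μ/2) * ‖xbar' - z'‖^2) - (f xbar + (μ/2) * ‖xbar - z‖^2)
      ≤ (f xbar + (μ/2) * ‖xbar - z'‖^2) - (f xbar + (μ/2) * ‖xbar - z‖^2) :=
        sub_le_sub_right (hxbar'.2 xbar hxbarX hxbarA) _
    _ = μ * ⟪z' - z, z - xbar⟫ + (μ/2) * ‖z - z'‖^2 := by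
        rw [prox_objective_recenter f μ xbar z z']
        ring
    _ ≤ μ * ⟪z' - z, z - xbar⟫ + (μ^2/(2*(μ - Lf))) * ‖z - z'‖^2 := by
        gcongr _ + ?_ * _
        exact half_le_sq_div_two_mul_sub hLf hμ hμLf

theorem stmt_6
    {E F : Type*}
    [NormedAddCommGroup E] [InnerProductSpace ℝ E] [FiniteDimensional ℝ E]
    [NormedAddCommGroup F] [InnerProductSpace ℝ F] [FiniteDimensional ℝ F]
    (A : E →L[ℝ] F) (b : F) (X : Set E)
    (hXne : X.Nonempty) (hXcl : IsClosed X) (hXcv : Convex ℝ X)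
    (f : E → ℝ) (f' : E → E) (Lf : ℝ) (hLf : 0 ≤ Lf)
    (hf : ∀ x, HasGradientAt f (f' x) x)
    (hlip : ∀ u v, ‖f' u - f' v‖ ≤ Lf * ‖u - v‖)
    (ρ μ : ℝ) (hρ : 0 ≤ ρ) (hμ : 0 < μ)
    (K : E → F → E → ℝ)
    (hK : ∀ x y z, K x y z =
      f x + ⟪A x - b, y⟫ + (ρ/2) * ‖A x - b‖^2 + (μ/2) * ‖x - z‖^2)
    (hμLf : Lf < μ)
    (hfeas : ∃ w ∈ X, A w = b)
    (z z' : E) (xbar xbar' : E)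
    (hxbar : (xbar ∈ X ∧ A xbar = b) ∧ ∀ w, w ∈ X → A w = b →
      f xbar + (μ/2) * ‖xbar - z‖^2 ≤ f w + (μ/2) * ‖w - z‖^2)
    (hxbar' : (xbar' ∈ X ∧ A xbar' = b) ∧ ∀ w, w ∈ X → A w = b →
      f xbar' + (μ/2) * ‖xbar' - z'‖^2 ≤ f w + (μ/2) * ‖w - z'‖^2) :
    (f xbar' + (μ/2) * ‖xbar' - z'‖^2) - (f xbar + (μ/2) * ‖xbar - z‖^2)
      ≤ μ * ⟪z' - z, z - xbar⟫ + (μ^2/(2*(μ - Lf))) * ‖z - z'‖^2 :=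
  stmt_6_general A b X f Lf hLf μ hμ hμLf z z' xbar xbar' hxbar hxbar'
end

section
/- Let λ > 0 with μ + λ > L_f and set γ_s = μ − L_f + λ. Fix x, z ∈ E and y, y' ∈ F. Suppose u ∈ X minimizes w ↦ K(w, y, z) + (λ/2)‖w − x‖² over X and u' ∈ X minimizes w ↦ K(w, y', z) + (λ/2)‖w − x‖² over X. Then ‖u − u'‖ ≤ (‖A‖/γ_s)·‖y − y'‖. -/
open MeasureTheory
open scoped RealInnerProductSpace

-- VI lemma
theorem vi_aux {E : Type*} [NormedAddCommGroup E] [InnerProductSpace ℝ E]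
    {X : Set E} (hXcv : Convex ℝ X) {φ : E → ℝ} {u w : E} (hu : u ∈ X) (hw : w ∈ X)
    (hmin : ∀ p ∈ X, φ u ≤ φ p) {d : ℝ}
    (hd : HasDerivAt (fun t : ℝ => φ (u + t • (w - u))) d 0) : 0 ≤ d := by
  rw [hasDerivAt_iff_tendsto_slope] at hd
  have hd' := hd.mono_left (nhdsWithin_mono 0 (fun t (ht : t ∈ Set.Ioi (0:ℝ)) =>
    (ne_of_gt ht : t ≠ 0)))
  refine ge_of_tendsto hd' ?_
  filter_upwards [Ioo_mem_nhdsGT (zero_lt_one)] with t ht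
  have hmem : u + t • (w - u) ∈ X := by
    have := hXcv hu hw (by linarith [ht.2] : (0:ℝ) ≤ 1 - t) (le_of_lt ht.1) (by ring)
    convert this using 1
    module
  have h0 : φ (u + (0:ℝ) • (w - u)) = φ u := by simp
  have := hmin _ hmem
  rw [slope_def_field]
  rw [h0] at *
  have : φ u ≤ φ (u + t • (w - u)) := hmin _ hmem
  apply div_nonneg
  · simpa using sub_nonneg.mpr this
  · simpa using le_of_lt ht.1

theorem stmt_9
    {E F : Type*}
    [NormedAddCommGroup E] [InnerProductSpace ℝ E] [FiniteDimensional ℝ E]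
    [NormedAddCommGroup F] [InnerProductSpace ℝ F] [FiniteDimensional ℝ F]
    (A : E →L[ℝ] F) (b : F) (X : Set E)
    (hXne : X.Nonempty) (hXcl : IsClosed X) (hXcv : Convex ℝ X)
    (f : E → ℝ) (f' : E → E) (Lf : ℝ) (hLf : 0 ≤ Lf)
    (hf : ∀ x, HasGradientAt f (f' x) x)
    (hlip : ∀ u v, ‖f' u - f' v‖ ≤ Lf * ‖u - v‖)
    (ρ μ : ℝ) (hρ : 0 ≤ ρ) (hμ : 0 < μ)
    (K : E → F → E → ℝ)
    (hK : ∀ x y z, K x y z =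
      f x + ⟪A x - b, y⟫ + (ρ/2) * ‖A x - b‖^2 + (μ/2) * ‖x - z‖^2)
    (lam : ℝ) (hlam : 0 < lam) (hml : Lf < μ + lam)
    (γs : ℝ) (hγs : γs = μ - Lf + lam)
    (x z : E) (y y' : F) (u u' : E)
    (hu : u ∈ X ∧ ∀ w ∈ X,
      K u y z + (lam/2) * ‖u - x‖^2 ≤ K w y z + (lam/2) * ‖w - x‖^2)
    (hu' : u' ∈ X ∧ ∀ w ∈ X,
      K u' y' z + (lam/2) * ‖u' - x‖^2 ≤ K w y' z + (lam/2) * ‖w - x‖^2) :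
    ‖u - u'‖ ≤ (‖A‖/γs) * ‖y - y'‖ := by
  have hγpos : 0 < γs := by rw [hγs]; linarith
  -- derivative computation
  have key : ∀ (p vv : E) (yy : F), HasDerivAt
      (fun t : ℝ => K (p + t • vv) yy z + (lam/2) * ‖(p + t • vv) - x‖^2)
      (⟪f' p, vv⟫ + ⟪A vv, yy⟫ + ρ * ⟪A p - b, A vv⟫ + μ * ⟪p - z, vv⟫
        + lam * ⟪p - x, vv⟫) 0 := by
    intro p vv yy
    have hc : HasDerivAt (fun t : ℝ => p + t • vv) vv 0 := by
      simpa using ((hasDerivAt_id (0:ℝ)).smul_const vv).const_add p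
    have hAc : HasDerivAt (fun t : ℝ => A (p + t • vv) - b) (A vv) 0 := by
      simpa using (A.hasFDerivAt.comp_hasDerivAt 0 hc).sub_const b
    have h1 : HasDerivAt (fun t : ℝ => f (p + t • vv)) ⟪f' p, vv⟫ 0 := by
      have := (hf (p + (0:ℝ) • vv)).hasFDerivAt.comp_hasDerivAt 0 hc
      simpa [InnerProductSpace.toDual_apply_apply, Function.comp_def] using this
    have h2 : HasDerivAt (fun t : ℝ => ⟪A (p + t • vv) - b, yy⟫) ⟪A vv, yy⟫ 0 := by
      have := hAc.inner ℝ (hasDerivAt_const (0:ℝ) yy)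
      simpa using this
    have h3 : HasDerivAt (fun t : ℝ => (ρ/2) * ‖A (p + t • vv) - b‖^2)
        (ρ * ⟪A p - b, A vv⟫) 0 := by
      have h := (hAc.norm_sq).const_mul (ρ/2)
      simp only [zero_smul, add_zero] at h
      exact h.congr_deriv (by ring)
    have h4 : HasDerivAt (fun t : ℝ => (μ/2) * ‖(p + t • vv) - z‖^2)
        (μ * ⟪p - z, vv⟫) 0 := by
      have h := ((hc.sub_const z).norm_sq).const_mul (μ/2)
      simp only [zero_smul, add_zero] at h
      exact h.congr_deriv (by ring)
    have h5 : HasDerivAt (fun t : ℝ => (lam/2) * ‖(p + t • vv) - x‖^2)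
        (lam * ⟪p - x, vv⟫) 0 := by
      have h := ((hc.sub_const x).norm_sq).const_mul (lam/2)
      simp only [zero_smul, add_zero] at h
      exact h.congr_deriv (by ring)
    have hsum := (((h1.add h2).add h3).add h4).add h5
    have hfe : (fun t : ℝ => K (p + t • vv) yy z + (lam/2) * ‖(p + t • vv) - x‖^2)
        = (fun t : ℝ => ((((f (p + t • vv) + ⟪A (p + t • vv) - b, yy⟫)
          + (ρ/2) * ‖A (p + t • vv) - b‖^2) + (μ/2) * ‖(p + t • vv) - z‖^2)
          + (lam/2) * ‖(p + t • vv) - x‖^2)) := by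
      funext t
      rw [hK]
    rw [hfe]
    exact hsum
  set v : E := u' - u with hv
  have vi1 : 0 ≤ ⟪f' u, v⟫ + ⟪A v, y⟫ + ρ * ⟪A u - b, A v⟫ + μ * ⟪u - z, v⟫
      + lam * ⟪u - x, v⟫ :=
    vi_aux (φ := fun w => K w y z + (lam/2) * ‖w - x‖^2) hXcv hu.1 hu'.1 (fun p hp => hu.2 p hp) (key u v y)
  have vi2 : 0 ≤ ⟪f' u', u - u'⟫ + ⟪A (u - u'), y'⟫ + ρ * ⟪A u' - b, A (u - u')⟫
      + μ * ⟪u' - z, u - u'⟫ + lam * ⟪u' - x, u - u'⟫ :=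
    vi_aux (φ := fun w => K w y' z + (lam/2) * ‖w - x‖^2) hXcv hu'.1 hu.1 (fun p hp => hu'.2 p hp) (key u' (u - u') y')
  have huv : u - u' = -v := by rw [hv]; abel
  rw [huv] at vi2
  -- expand inner products
  have e1 : ⟪A (-v), y'⟫ = -⟪A v, y'⟫ := by rw [map_neg, inner_neg_left]
  have e2 : ρ * ⟪A u' - b, A (-v)⟫ = -(ρ * ⟪A u' - b, A v⟫) := by
    rw [map_neg, inner_neg_right]; ring
  have e3 : ⟪f' u', -v⟫ = -⟪f' u', v⟫ := inner_neg_right _ _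
  have e4 : μ * ⟪u' - z, -v⟫ = -(μ * ⟪u' - z, v⟫) := by rw [inner_neg_right]; ring
  have e5 : lam * ⟪u' - x, -v⟫ = -(lam * ⟪u' - x, v⟫) := by rw [inner_neg_right]; ring
  rw [e1, e2, e3, e4, e5] at vi2
  have combo : (μ + lam) * ‖v‖^2 + ρ * ‖A v‖^2 ≤ ⟪f' u - f' u', v⟫ + ⟪A v, y - y'⟫ := by
    have d1 : ⟪A u - b, A v⟫ - ⟪A u' - b, A v⟫ = -‖A v‖^2 := by
      rw [← inner_sub_left]
      have : A u - b - (A u' - b) = -(A v) := by rw [hv, map_sub]; abel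
      rw [this, inner_neg_left, real_inner_self_eq_norm_sq]
    have d2 : ⟪u - z, v⟫ - ⟪u' - z, v⟫ = -‖v‖^2 := by
      rw [← inner_sub_left]
      have : u - z - (u' - z) = -v := by rw [hv]; abel
      rw [this, inner_neg_left, real_inner_self_eq_norm_sq]
    have d3 : ⟪u - x, v⟫ - ⟪u' - x, v⟫ = -‖v‖^2 := by
      rw [← inner_sub_left]
      have : u - x - (u' - x) = -v := by rw [hv]; abel
      rw [this, inner_neg_left, real_inner_self_eq_norm_sq]
    have d4 : ⟪f' u - f' u', v⟫ = ⟪f' u, v⟫ - ⟪f' u', v⟫ := inner_sub_left _ _ _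
    have d5 : ⟪A v, y - y'⟫ = ⟪A v, y⟫ - ⟪A v, y'⟫ := inner_sub_right _ _ _
    have d1' : ρ * ⟪A u - b, A v⟫ - ρ * ⟪A u' - b, A v⟫ = -(ρ * ‖A v‖^2) := by
      rw [← mul_sub, d1]; ring
    have d2' : μ * ⟪u - z, v⟫ - μ * ⟪u' - z, v⟫ = -(μ * ‖v‖^2) := by
      rw [← mul_sub, d2]; ring
    have d3' : lam * ⟪u - x, v⟫ - lam * ⟪u' - x, v⟫ = -(lam * ‖v‖^2) := by
      rw [← mul_sub, d3]; ring
    rw [d4, d5]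
    linarith [vi1, vi2, d1', d2', d3']
  have bnd1 : ⟪f' u - f' u', v⟫ ≤ Lf * ‖v‖^2 := by
    have h := real_inner_le_norm (f' u - f' u') v
    have h2 : ‖f' u - f' u'‖ ≤ Lf * ‖v‖ := by
      have := hlip u u'
      rwa [show ‖u - u'‖ = ‖v‖ by rw [huv, norm_neg]] at this
    nlinarith [norm_nonneg v, norm_nonneg (f' u - f' u')]
  have bnd2 : ⟪A v, y - y'⟫ ≤ ‖A‖ * ‖v‖ * ‖y - y'‖ := by
    have h := real_inner_le_norm (A v) (y - y')
    have h2 : ‖A v‖ ≤ ‖A‖ * ‖v‖ := A.le_opNorm v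
    nlinarith [norm_nonneg (y - y'), norm_nonneg (A v)]
  have main : γs * ‖v‖^2 ≤ ‖A‖ * ‖v‖ * ‖y - y'‖ := by
    have hAv : 0 ≤ ρ * ‖A v‖^2 := by positivity
    rw [hγs]; nlinarith
  have hnorm : ‖u - u'‖ = ‖v‖ := by rw [huv, norm_neg]
  rw [hnorm]
  rcases eq_or_lt_of_le (norm_nonneg v) with h0 | h0
  · rw [← h0]
    positivity
  · rw [div_mul_eq_mul_div, le_div_iff₀ hγpos]
    have h2 : ‖v‖ * γs * ‖v‖ ≤ ‖A‖ * ‖y - y'‖ * ‖v‖ := by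
      calc ‖v‖ * γs * ‖v‖ = γs * ‖v‖^2 := by ring
        _ ≤ ‖A‖ * ‖v‖ * ‖y - y'‖ := main
        _ = ‖A‖ * ‖y - y'‖ * ‖v‖ := by ring
    exact le_of_mul_le_mul_right h2 h0
end

section
/- Assume μ > L_f, let λ > 0, and set γ = (μ − L_f)λ/(μ − L_f + λ). Fix x, z ∈ E and y ∈ F. Suppose u ∈ X minimizes w ↦ K(w, y, z) + (λ/2)‖w − x‖² over X and x* ∈ X minimizes w ↦ K(w, y, z) over X. Then ‖Ax − b‖² ≤ (2‖A‖²λ²/γ²)·‖x − u‖² + 2·‖Ax* − b‖². -/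
open MeasureTheory
open scoped RealInnerProductSpace
open intervalIntegral

theorem descent
    {E : Type*} [NormedAddCommGroup E] [InnerProductSpace ℝ E] [CompleteSpace E]
    (f : E → ℝ) (f' : E → E) (Lf : ℝ) (hLf : 0 ≤ Lf)
    (hf : ∀ x, HasGradientAt f (f' x) x)
    (hlip : ∀ u v, ‖f' u - f' v‖ ≤ Lf * ‖u - v‖) (a v : E) :
    f a + ⟪f' a, v⟫ - Lf/2 * ‖v‖^2 ≤ f (a + v) := by
  have hline : ∀ t : ℝ, HasDerivAt (fun t : ℝ => f (a + t • v)) ⟪f' (a + t • v), v⟫ t := by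
    intro t
    have h1 : HasDerivAt (fun t : ℝ => a + t • v) v t := by
      simpa using ((hasDerivAt_id t).smul_const v).const_add a
    have h2 := (hf (a + t • v)).hasFDerivAt.comp_hasDerivAt t h1
    simpa [InnerProductSpace.toDual_apply_apply, real_inner_comm, Function.comp_def] using h2
  have hcontf' : Continuous f' := by
    rcases le_or_gt Lf 0 with h | h
    · have : ∀ u w, f' u = f' w := by
        intro u w
        have := hlip u w
        have h2 : Lf * ‖u - w‖ ≤ 0 := mul_nonpos_of_nonpos_of_nonneg h (norm_nonneg _)
        have : ‖f' u - f' w‖ ≤ 0 := le_trans this h2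
        have := le_antisymm this (norm_nonneg _)
        rwa [norm_eq_zero, sub_eq_zero] at this
      have : f' = fun _ => f' a := funext fun u => this u a
      rw [this]; exact continuous_const
    · exact (LipschitzWith.of_dist_le_mul (K := ⟨Lf, h.le⟩) (fun u w => by
        rw [dist_eq_norm, dist_eq_norm]; exact hlip u w)).continuous
  have hcont : Continuous fun t : ℝ => (⟪f' (a + t • v), v⟫ : ℝ) := by
    apply Continuous.inner
    · exact hcontf'.comp (by continuity)
    · exact continuous_const
  have hint : f (a + v) - f a = ∫ t in (0:ℝ)..1, ⟪f' (a + t • v), v⟫ := by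
    have := integral_eq_sub_of_hasDerivAt (f := fun t : ℝ => f (a + t • v))
      (f' := fun t : ℝ => ⟪f' (a + t • v), v⟫) (a := 0) (b := 1)
      (fun t _ => hline t) (hcont.intervalIntegrable 0 1)
    simp at this
    rw [this]
  have key : |(∫ t in (0:ℝ)..1, ⟪f' (a + t • v), v⟫) - ⟪f' a, v⟫| ≤ Lf/2 * ‖v‖^2 := by
    have h1 : (∫ t in (0:ℝ)..1, ⟪f' (a + t • v), v⟫) - ⟪f' a, v⟫
        = ∫ t in (0:ℝ)..1, (⟪f' (a + t • v), v⟫ - ⟪f' a, v⟫) := by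
      rw [intervalIntegral.integral_sub (hcont.intervalIntegrable 0 1)
        (intervalIntegrable_const)]
      simp
    rw [h1]
    have h2 : ∀ t ∈ Set.Icc (0:ℝ) 1, ‖(⟪f' (a + t • v), v⟫ : ℝ) - ⟪f' a, v⟫‖ ≤ Lf * ‖v‖^2 * t := by
      intro t ht
      rw [← inner_sub_left]
      calc ‖(⟪f' (a + t • v) - f' a, v⟫ : ℝ)‖ ≤ ‖f' (a + t • v) - f' a‖ * ‖v‖ :=
            norm_inner_le_norm _ _
      _ ≤ (Lf * ‖a + t • v - a‖) * ‖v‖ := by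
            gcongr; exact hlip _ _
      _ = Lf * ‖v‖^2 * t := by
            simp [norm_smul, abs_of_nonneg ht.1]; ring
    rw [← Real.norm_eq_abs]
    calc ‖∫ t in (0:ℝ)..1, (⟪f' (a + t • v), v⟫ - ⟪f' a, v⟫)‖
        ≤ |∫ t in (0:ℝ)..1, Lf * ‖v‖^2 * t| := by
          apply intervalIntegral.norm_integral_le_abs_of_norm_le
          · filter_upwards [ae_restrict_mem measurableSet_Ioc] with t ht
            exact h2 t ⟨le_of_lt (by simpa using ht.1), by simpa using ht.2⟩
          · exact (continuous_const.mul continuous_id).intervalIntegrable 0 1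
      _ = Lf / 2 * ‖v‖^2 := by
          rw [intervalIntegral.integral_const_mul, integral_id]
          rw [abs_of_nonneg (by positivity)]
          ring
  have hlow := (abs_le.1 key).1
  linarith [hint, hlow]

theorem combo {G : Type*} [NormedAddCommGroup G] [InnerProductSpace ℝ G] (a b : G) (t : ℝ) :
    ‖(1-t)•a + t•b‖^2 = (1-t)*‖a‖^2 + t*‖b‖^2 - t*(1-t)*‖a-b‖^2 := by
  have e : ∀ v : G, ‖v‖^2 = ⟪v,v⟫ := fun v => (real_inner_self_eq_norm_sq v).symm
  simp only [e, inner_add_left, inner_add_right, inner_sub_left, inner_sub_right,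
    real_inner_smul_left, real_inner_smul_right, real_inner_comm a b]
  ring

theorem semiconvex
    {E : Type*} [NormedAddCommGroup E] [InnerProductSpace ℝ E] [CompleteSpace E]
    (f : E → ℝ) (f' : E → E) (Lf : ℝ) (hLf : 0 ≤ Lf)
    (hf : ∀ x, HasGradientAt f (f' x) x)
    (hlip : ∀ u v, ‖f' u - f' v‖ ≤ Lf * ‖u - v‖) (p w : E) (t : ℝ)
    (ht : t ∈ Set.Icc (0:ℝ) 1) :
    f (p + t•(w-p)) ≤ (1-t)*f p + t*f w + Lf/2*t*(1-t)*‖w-p‖^2 := by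
  set m := p + t•(w-p) with hm
  have h1 := descent f f' Lf hLf hf hlip m (-(t•(w-p)))
  have h2 := descent f f' Lf hLf hf hlip m ((1-t)•(w-p))
  have e1 : m + -(t•(w-p)) = p := by rw [hm]; abel
  have e2 : m + (1-t)•(w-p) = w := by rw [hm, sub_smul, one_smul]; abel
  rw [e1] at h1; rw [e2] at h2
  have i1 : (⟪f' m, -(t•(w-p))⟫ : ℝ) = -t * ⟪f' m, w-p⟫ := by
    rw [inner_neg_right, real_inner_smul_right]; ring
  have i2 : (⟪f' m, (1-t)•(w-p)⟫ : ℝ) = (1-t) * ⟪f' m, w-p⟫ := by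
    rw [real_inner_smul_right]
  have n1 : ‖-(t•(w-p))‖^2 = t^2*‖w-p‖^2 := by
    rw [norm_neg, norm_smul, mul_pow, Real.norm_eq_abs, sq_abs]
  have n2 : ‖(1-t)•(w-p)‖^2 = (1-t)^2*‖w-p‖^2 := by
    rw [norm_smul, mul_pow, Real.norm_eq_abs, sq_abs]
  rw [i1, n1] at h1; rw [i2, n2] at h2
  obtain ⟨ht0, ht1⟩ := ht
  nlinarith [mul_le_mul_of_nonneg_left h1 (by linarith : (0:ℝ) ≤ 1 - t),
    mul_le_mul_of_nonneg_left h2 ht0]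

theorem minseg
    {E : Type*} [NormedAddCommGroup E] [InnerProductSpace ℝ E]
    (X : Set E) (hXcv : Convex ℝ X) (g : E → ℝ) (σ : ℝ) (p : E) (hp : p ∈ X)
    (hmin : ∀ q ∈ X, g p ≤ g q) (w : E) (hw : w ∈ X)
    (hseg : ∀ t ∈ Set.Icc (0:ℝ) 1,
      g (p + t•(w-p)) ≤ (1-t)*g p + t*g w - σ/2*t*(1-t)*‖w-p‖^2) :
    g p + σ/2*‖w-p‖^2 ≤ g w := by
  have key : ∀ t ∈ Set.Ioc (0:ℝ) 1, g p + σ/2*(1-t)*‖w-p‖^2 ≤ g w := by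
    intro t ht
    obtain ⟨ht0, ht1⟩ := ht
    have hmem : p + t•(w-p) ∈ X := by
      have := hXcv hp hw (by linarith : (0:ℝ) ≤ 1 - t) ht0.le (by ring)
      have e : (1-t)•p + t•w = p + t•(w-p) := by rw [smul_sub, sub_smul, one_smul]; abel
      rwa [e] at this
    have h1 := hmin _ hmem
    have h2 := hseg t ⟨ht0.le, ht1⟩
    have h3 : t * g p ≤ t * g w - σ/2*t*(1-t)*‖w-p‖^2 := by linarith
    nlinarith
  have htend : Filter.Tendsto (fun t : ℝ => g p + σ/2*(1-t)*‖w-p‖^2)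
      (nhdsWithin 0 (Set.Ioi 0)) (nhds (g p + σ/2*‖w-p‖^2)) := by
    have : Filter.Tendsto (fun t : ℝ => g p + σ/2*(1-t)*‖w-p‖^2)
        (nhds 0) (nhds (g p + σ/2*(1-(0:ℝ))*‖w-p‖^2)) := by
      apply Continuous.tendsto
      continuity
    simpa using this.mono_left nhdsWithin_le_nhds
  refine le_of_tendsto htend ?_
  filter_upwards [Ioo_mem_nhdsGT_of_mem (by norm_num : (0:ℝ) ∈ Set.Ico 0 1)] with t ht
  exact key t ⟨ht.1, ht.2.le⟩

theorem segK
    {E F : Type*}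
    [NormedAddCommGroup E] [InnerProductSpace ℝ E] [CompleteSpace E]
    [NormedAddCommGroup F] [InnerProductSpace ℝ F]
    (A : E →L[ℝ] F) (b : F)
    (f : E → ℝ) (f' : E → E) (Lf : ℝ) (hLf : 0 ≤ Lf)
    (hf : ∀ x, HasGradientAt f (f' x) x)
    (hlip : ∀ u v, ‖f' u - f' v‖ ≤ Lf * ‖u - v‖)
    (ρ μ : ℝ) (hρ : 0 ≤ ρ) (y : F) (z : E) (c : ℝ) (x₀ : E)
    (p w : E) (t : ℝ) (ht : t ∈ Set.Icc (0:ℝ) 1) :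
    (fun q => f q + ⟪A q - b, y⟫ + (ρ/2)*‖A q - b‖^2 + (μ/2)*‖q - z‖^2 + (c/2)*‖q - x₀‖^2)
      (p + t•(w-p))
    ≤ (1-t)*((fun q => f q + ⟪A q - b, y⟫ + (ρ/2)*‖A q - b‖^2 + (μ/2)*‖q - z‖^2 + (c/2)*‖q - x₀‖^2) p)
      + t*((fun q => f q + ⟪A q - b, y⟫ + (ρ/2)*‖A q - b‖^2 + (μ/2)*‖q - z‖^2 + (c/2)*‖q - x₀‖^2) w)
      - (μ - Lf + c)/2*t*(1-t)*‖w-p‖^2 := by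
  simp only
  obtain ⟨ht0, ht1⟩ := ht
  set m := p + t•(w-p) with hm
  have hF := semiconvex f f' Lf hLf hf hlip p w t ⟨ht0, ht1⟩
  have eAm : A m - b = (1-t)•(A p - b) + t•(A w - b) := by
    rw [hm]
    simp only [map_add, _root_.map_smul, map_sub, smul_sub, sub_smul, one_smul]
    module
  have emz : m - z = (1-t)•(p - z) + t•(w - z) := by
    rw [hm]
    simp only [smul_sub, sub_smul, one_smul]
    abel
  have emx : m - x₀ = (1-t)•(p - x₀) + t•(w - x₀) := by
    rw [hm]
    simp only [smul_sub, sub_smul, one_smul]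
    abel
  have hLin : (⟪A m - b, y⟫ : ℝ) = (1-t)*⟪A p - b, y⟫ + t*⟪A w - b, y⟫ := by
    rw [eAm, inner_add_left, real_inner_smul_left, real_inner_smul_left]
  have hR : ‖A m - b‖^2 ≤ (1-t)*‖A p - b‖^2 + t*‖A w - b‖^2 := by
    rw [eAm, combo]
    nlinarith [sq_nonneg ‖(A p - b) - (A w - b)‖, mul_nonneg ht0 (by linarith : (0:ℝ) ≤ 1-t),
      sq_nonneg t]
  have hM : ‖m - z‖^2 = (1-t)*‖p - z‖^2 + t*‖w - z‖^2 - t*(1-t)*‖w - p‖^2 := by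
    rw [emz, combo]
    have : p - z - (w - z) = p - w := by abel
    rw [this, norm_sub_rev p w]
  have hC : ‖m - x₀‖^2 = (1-t)*‖p - x₀‖^2 + t*‖w - x₀‖^2 - t*(1-t)*‖w - p‖^2 := by
    rw [emx, combo]
    have : p - x₀ - (w - x₀) = p - w := by abel
    rw [this, norm_sub_rev p w]
  have hR' := mul_le_mul_of_nonneg_left hR (by positivity : (0:ℝ) ≤ ρ/2)
  have hM' : (μ/2)*‖m - z‖^2 = (μ/2)*((1-t)*‖p - z‖^2 + t*‖w - z‖^2 - t*(1-t)*‖w - p‖^2) := by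
    rw [hM]
  have hC' : (c/2)*‖m - x₀‖^2 = (c/2)*((1-t)*‖p - x₀‖^2 + t*‖w - x₀‖^2 - t*(1-t)*‖w - p‖^2) := by
    rw [hC]
  linarith [hF, hLin, hR', hM', hC']

set_option maxHeartbeats 1000000 in
theorem stmt_11
    {E F : Type*}
    [NormedAddCommGroup E] [InnerProductSpace ℝ E] [FiniteDimensional ℝ E]
    [NormedAddCommGroup F] [InnerProductSpace ℝ F] [FiniteDimensional ℝ F]
    (A : E →L[ℝ] F) (b : F) (X : Set E)
    (hXne : X.Nonempty) (hXcl : IsClosed X) (hXcv : Convex ℝ X)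
    (f : E → ℝ) (f' : E → E) (Lf : ℝ) (hLf : 0 ≤ Lf)
    (hf : ∀ x, HasGradientAt f (f' x) x)
    (hlip : ∀ u v, ‖f' u - f' v‖ ≤ Lf * ‖u - v‖)
    (ρ μ : ℝ) (hρ : 0 ≤ ρ) (hμ : 0 < μ)
    (K : E → F → E → ℝ)
    (hK : ∀ x y z, K x y z =
      f x + ⟪A x - b, y⟫ + (ρ/2) * ‖A x - b‖^2 + (μ/2) * ‖x - z‖^2)
    (hμLf : Lf < μ) (lam : ℝ) (hlam : 0 < lam)
    (γ : ℝ) (hγ : γ = (μ - Lf)*lam/(μ - Lf + lam))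
    (x z : E) (y : F) (u xstar : E)
    (hu : u ∈ X ∧ ∀ w ∈ X,
      K u y z + (lam/2) * ‖u - x‖^2 ≤ K w y z + (lam/2) * ‖w - x‖^2)
    (hxstar : xstar ∈ X ∧ ∀ w ∈ X, K xstar y z ≤ K w y z) :
    ‖A x - b‖^2 ≤ (2*‖A‖^2*lam^2/γ^2) * ‖x - u‖^2 + 2*‖A xstar - b‖^2 := by
  set G0 : E → ℝ := fun q => f q + ⟪A q - b, y⟫ + (ρ/2)*‖A q - b‖^2 + (μ/2)*‖q - z‖^2
      + ((0:ℝ)/2)*‖q - x‖^2 with hG0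
  set Gl : E → ℝ := fun q => f q + ⟪A q - b, y⟫ + (ρ/2)*‖A q - b‖^2 + (μ/2)*‖q - z‖^2
      + (lam/2)*‖q - x‖^2 with hGl
  have keq0 : ∀ q, G0 q = K q y z := by
    intro q; rw [hG0, hK]; ring
  have keql : ∀ q, Gl q = K q y z + (lam/2)*‖q - x‖^2 := by
    intro q; rw [hGl, hK]
  have h1 := minseg X hXcv G0 (μ - Lf + 0) xstar hxstar.1
    (fun q hq => by rw [keq0, keq0]; exact hxstar.2 q hq) u hu.1
    (fun t ht => segK A b f f' Lf hLf hf hlip ρ μ hρ y z 0 x xstar u t ht)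
  have h2 := minseg X hXcv Gl (μ - Lf + lam) u hu.1
    (fun q hq => by rw [keql, keql]; exact hu.2 q hq) xstar hxstar.1
    (fun t ht => segK A b f f' Lf hLf hf hlip ρ μ hρ y z lam x u xstar t ht)
  rw [keq0 xstar, keq0 u] at h1
  rw [keql u, keql xstar] at h2
  rw [norm_sub_rev xstar u] at h2
  set s := ‖u - xstar‖ with hs0
  set d := ‖u - x‖ with hd0
  have hsn : 0 ≤ s := norm_nonneg _
  have hdn : 0 ≤ d := norm_nonneg _
  set σ0 : ℝ := μ - Lf with hσ0
  have hσp : 0 < σ0 := by rw [hσ0]; linarith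
  have htri1 : ‖xstar - x‖ ≤ s + d := by
    calc ‖xstar - x‖ = ‖(xstar - u) + (u - x)‖ := by rw [sub_add_sub_cancel]
    _ ≤ ‖xstar - u‖ + ‖u - x‖ := norm_add_le _ _
    _ = s + d := by rw [norm_sub_rev xstar u]
  have htri1sq : ‖xstar - x‖^2 ≤ (s + d)^2 := by
    have := pow_le_pow_left₀ (norm_nonneg _) htri1 2
    exact this
  -- σ0 * s^2 ≤ lam * s * d
  have hkey : σ0 * s^2 ≤ lam * (s * d) := by nlinarith [h1, h2, htri1sq]
  have hsd : σ0 * s ≤ lam * d := by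
    rcases eq_or_lt_of_le hsn with h | h
    · rw [← h, mul_zero]; positivity
    · nlinarith
  have hT : ‖x - xstar‖ ≤ d + s := by
    calc ‖x - xstar‖ = ‖(x - u) + (u - xstar)‖ := by rw [sub_add_sub_cancel]
    _ ≤ ‖x - u‖ + ‖u - xstar‖ := norm_add_le _ _
    _ = d + s := by rw [norm_sub_rev x u]
  set T := ‖x - xstar‖ with hT0
  have hTn : 0 ≤ T := norm_nonneg _
  have hγp : 0 < γ := by rw [hγ]; exact div_pos (mul_pos hσp hlam) (by linarith)
  have hγe : γ * (σ0 + lam) = σ0 * lam := by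
    rw [hγ, hσ0, div_mul_cancel₀ _ (by linarith : μ - Lf + lam ≠ 0)]
  have hγT : γ * T ≤ lam * d := by
    have h3 : γ * T * (σ0 + lam) ≤ γ * (d + s) * (σ0 + lam) := by
      have hpos : (0:ℝ) < σ0 + lam := by linarith
      exact mul_le_mul_of_nonneg_right (mul_le_mul_of_nonneg_left hT hγp.le) hpos.le
    have h4 : γ * (d + s) * (σ0 + lam) = σ0 * lam * (d + s) := by
      rw [← hγe]; ring
    have h5 : σ0 * lam * (d + s) ≤ lam * d * (σ0 + lam) := by nlinarith
    have h6 : (0:ℝ) < σ0 + lam := by linarith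
    have := le_trans (le_trans h3 (le_of_eq h4)) h5
    exact le_of_mul_le_mul_right (by linarith [this]) h6
  have hAx : ‖A x - b‖ ≤ ‖A‖ * T + ‖A xstar - b‖ := by
    calc ‖A x - b‖ = ‖A (x - xstar) + (A xstar - b)‖ := by rw [map_sub, sub_add_sub_cancel]
    _ ≤ ‖A (x - xstar)‖ + ‖A xstar - b‖ := norm_add_le _ _
    _ ≤ ‖A‖ * T + ‖A xstar - b‖ := by gcongr; exact A.le_opNorm _
  have hAn : (0:ℝ) ≤ ‖A‖ := norm_nonneg _
  have hCn : (0:ℝ) ≤ ‖A xstar - b‖ := norm_nonneg _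
  have hsq1 : ‖A x - b‖^2 ≤ 2*(‖A‖*T)^2 + 2*‖A xstar - b‖^2 := by
    nlinarith [sq_nonneg (‖A‖*T - ‖A xstar - b‖), norm_nonneg (A x - b), sq_nonneg (‖A‖*T + ‖A xstar - b‖)]
  have hsq2 : γ^2 * T^2 ≤ lam^2 * d^2 := by nlinarith [mul_self_le_mul_self (mul_nonneg hγp.le hTn) hγT]
  have hfin : 2*(‖A‖*T)^2 ≤ (2*‖A‖^2*lam^2/γ^2) * d^2 := by
    rw [div_mul_eq_mul_div, le_div_iff₀ (by positivity : (0:ℝ) < γ^2)]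
    nlinarith [sq_nonneg ‖A‖]
  have hxd : ‖x - u‖ = d := by rw [hd0, norm_sub_rev x u]
  rw [hxd]
  linarith
end

section
/- Assume μ > L_f, let λ > 0, and set γ = (μ − L_f)λ/(μ − L_f + λ). For every fixed y ∈ F and z ∈ E, the function φ : E → ℝ defined by φ(x) = inf_{u ∈ X} [ K(u, y, z) + (λ/2)‖u − x‖² ] is γ-strongly convex on E, i.e., x ↦ φ(x) − (γ/2)‖x‖² is convex on E. -/
open MeasureTheory
open scoped RealInnerProductSpace

section aux
variable {E : Type*} [NormedAddCommGroup E] [InnerProductSpace ℝ E] [CompleteSpace E]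

lemma le_add_eps' {p q : ℝ} (h : ∀ ε : ℝ, 0 < ε → p ≤ q + ε) : p ≤ q := by
  by_contra hc; push_neg at hc
  have := h ((p - q)/2) (by linarith); linarith

lemma iInf_add_const' {ι : Sort*} [Nonempty ι] {g : ι → ℝ} (hb : BddBelow (Set.range g))
    (k : ℝ) : ⨅ i, (g i + k) = (⨅ i, g i) + k := by
  have hm : Monotone (fun r : ℝ => r + k) := fun _ _ h => by dsimp; linarith
  exact (Monotone.map_ciInf_of_continuousAt (by fun_prop) hm hb).symm

/-- tangent line inequality from monotone gradient, via MVT -/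
lemma tangent_of_monotone_grad (g : E → ℝ) (g' : E → E)
    (hg : ∀ x, HasGradientAt g (g' x) x)
    (hm : ∀ u v, 0 ≤ ⟪g' u - g' v, u - v⟫) :
    ∀ u v, g u + ⟪g' u, v - u⟫ ≤ g v := by
  intro u v
  set w := v - u with hw
  set q : ℝ → ℝ := fun s => g (u + s • w) with hq
  have hqd : ∀ s : ℝ, HasDerivAt q ⟪g' (u + s • w), w⟫ s := by
    intro s
    have h1 : HasDerivAt (fun s : ℝ => u + s • w) w s := by
      simpa using ((hasDerivAt_id s).smul_const w).const_add u
    have h2 := (hg (u + s • w)).hasFDerivAt.comp_hasDerivAt s h1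
    simp [InnerProductSpace.toDual_apply_apply] at h2; exact h2
  obtain ⟨ξ, hξ, hderiv⟩ := exists_hasDerivAt_eq_slope q (fun s => ⟪g' (u + s • w), w⟫)
    one_pos (fun s _ => (hqd s).continuousAt.continuousWithinAt) (fun s _ => hqd s)
  have hmono : ⟪g' u, w⟫ ≤ ⟪g' (u + ξ • w), w⟫ := by
    have h0 := hm (u + ξ • w) u
    have he : (u + ξ • w) - u = ξ • w := by abel
    rw [he, real_inner_smul_right] at h0
    have hξ0 : 0 < ξ := hξ.1
    nlinarith [h0, inner_sub_left (𝕜 := ℝ) (g' (u + ξ • w)) (g' u) w]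
  have hq1 : q 1 = g v := by simp [hq, hw]
  have hq0 : q 0 = g u := by simp [hq]
  rw [hq1, hq0] at hderiv
  have : ⟪g' (u + ξ • w), w⟫ = g v - g u := by
    rw [hderiv]; ring
  linarith [hmono, this.le, this.ge]

lemma convexOn_of_tangent (g : E → ℝ) (g' : E → E)
    (htan : ∀ u v, g u + ⟪g' u, v - u⟫ ≤ g v) :
    ConvexOn ℝ Set.univ g := by
  refine ⟨convex_univ, fun x _ y _ a b ha hb hab => ?_⟩
  set m := a • x + b • y with hm
  have h1 := htan m x
  have h2 := htan m y
  have hz : a • (x - m) + b • (y - m) = (0 : E) := by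
    have hb' : b = 1 - a := by linarith
    rw [hm, hb']; module
  have hsum : a * ⟪g' m, x - m⟫ + b * ⟪g' m, y - m⟫ = 0 := by
    rw [← real_inner_smul_right, ← real_inner_smul_right, ← inner_add_right, hz,
      inner_zero_right]
  simp only [smul_eq_mul]
  have e1 := mul_le_mul_of_nonneg_left h1 ha
  have e2 := mul_le_mul_of_nonneg_left h2 hb
  have e3 : a * g m + b * g m = g m := by rw [← add_mul, hab, one_mul]
  nlinarith [e1, e2, e3, hsum]

lemma hasGradientAt_sq' (c : ℝ) (z u : E) :
    HasGradientAt (fun u => c/2 * ‖u - z‖^2) (c • (u - z)) u := by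
  rw [hasGradientAt_iff_hasFDerivAt]
  have h0 : HasFDerivAt (fun u : E => u - z) (ContinuousLinearMap.id ℝ E) u :=
    (hasFDerivAt_id u).sub_const z
  have h1 := (h0.inner ℝ h0).const_mul (c/2)
  have heq : (fun u : E => c/2 * ‖u - z‖^2) = fun u => c/2 * ⟪u - z, u - z⟫ := by
    funext v; rw [real_inner_self_eq_norm_sq]
  rw [heq]
  convert h1 using 1
  · rfl
  ext w
  simp [real_inner_smul_left, inner_sub_left, inner_sub_right]
  rw [real_inner_comm w u, real_inner_comm w z]
  ring

variable {F : Type*} [NormedAddCommGroup F] [InnerProductSpace ℝ F]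
  [CompleteSpace F]

lemma hasGradientAt_lin' (A : E →L[ℝ] F) (b y : F) (u : E) :
    HasGradientAt (fun u => ⟪A u - b, y⟫) (ContinuousLinearMap.adjoint A y) u := by
  rw [hasGradientAt_iff_hasFDerivAt]
  have heq : (fun u : E => ⟪A u - b, y⟫) = fun u => ((innerSL ℝ y).comp A) u - ⟪b, y⟫ := by
    funext v; simp [inner_sub_left]; rw [real_inner_comm]
  rw [heq]
  have h2 := (((innerSL ℝ y).comp A).hasFDerivAt (x := u)).sub_const (⟪b, y⟫ : ℝ)
  convert h2 using 1
  · rfl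
  · rfl
  ext w
  simp [ContinuousLinearMap.adjoint_inner_left]

lemma hasGradientAt_quad' (c : ℝ) (A : E →L[ℝ] F) (b : F) (u : E) :
    HasGradientAt (fun u => c/2 * ‖A u - b‖^2)
      (c • (ContinuousLinearMap.adjoint A) (A u - b)) u := by
  rw [hasGradientAt_iff_hasFDerivAt]
  have h0 : HasFDerivAt (fun u : E => A u - b) (A : E →L[ℝ] F) u := A.hasFDerivAt.sub_const b
  have h1 := (h0.inner ℝ h0).const_mul (c/2)
  have heq : (fun u : E => c/2 * ‖A u - b‖^2) = fun u => c/2 * ⟪A u - b, A u - b⟫ := by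
    funext v; rw [real_inner_self_eq_norm_sq]
  rw [heq]
  convert h1 using 1
  · rfl
  ext w
  simp [real_inner_smul_left, ContinuousLinearMap.adjoint_inner_left, inner_sub_left,
    inner_sub_right]
  rw [real_inner_comm (A w) (A u), real_inner_comm (A w) b]
  ring

end aux

set_option maxHeartbeats 1000000 in
theorem stmt_13
    {E F : Type*}
    [NormedAddCommGroup E] [InnerProductSpace ℝ E] [FiniteDimensional ℝ E]
    [NormedAddCommGroup F] [InnerProductSpace ℝ F] [FiniteDimensional ℝ F]
    (A : E →L[ℝ] F) (b : F) (X : Set E)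
    (hXne : X.Nonempty) (hXcl : IsClosed X) (hXcv : Convex ℝ X)
    (f : E → ℝ) (f' : E → E) (Lf : ℝ) (hLf : 0 ≤ Lf)
    (hf : ∀ x, HasGradientAt f (f' x) x)
    (hlip : ∀ u v, ‖f' u - f' v‖ ≤ Lf * ‖u - v‖)
    (ρ μ : ℝ) (hρ : 0 ≤ ρ) (hμ : 0 < μ)
    (K : E → F → E → ℝ)
    (hK : ∀ x y z, K x y z =
      f x + ⟪A x - b, y⟫ + (ρ/2) * ‖A x - b‖^2 + (μ/2) * ‖x - z‖^2)
    (hμLf : Lf < μ) (lam : ℝ) (hlam : 0 < lam)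
    (γ : ℝ) (hγ : γ = (μ - Lf)*lam/(μ - Lf + lam))
    (y : F) (z : E) (φ : E → ℝ)
    (hφ : ∀ x, φ x = ⨅ u : X, (K u y z + (lam/2) * ‖(u : E) - x‖^2)) :
    ConvexOn ℝ Set.univ (fun x => φ x - (γ/2) * ‖x‖^2) := by
  haveI : Nonempty X := hXne.to_subtype
  set σ : ℝ := μ - Lf with hσdef
  have hσ : 0 < σ := by simp [hσdef]; linarith
  set c : ℝ := σ + lam with hcdef
  have hc : 0 < c := by positivity
  set t : ℝ := lam / c with htdef
  have ht : 0 ≤ t := by positivity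
  -- the strongly-convex-part h and its gradient
  set h : E → ℝ := fun u =>
    f u + ⟪A u - b, y⟫ + ρ/2 * ‖A u - b‖^2 + μ/2 * ‖u - z‖^2 - σ/2 * ‖u - 0‖^2 with hhdef
  set h' : E → E := fun u =>
    f' u + ContinuousLinearMap.adjoint A y + ρ • (ContinuousLinearMap.adjoint A) (A u - b)
      + μ • (u - z) - σ • (u - 0) with hh'def
  have hgrad : ∀ u, HasGradientAt h (h' u) u := by
    intro u
    have H1 := (hf u).hasFDerivAt
    have H2 := (hasGradientAt_lin' A b y u).hasFDerivAt
    have H3 := (hasGradientAt_quad' ρ A b u).hasFDerivAt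
    have H4 := (hasGradientAt_sq' μ z u).hasFDerivAt
    have H5 := (hasGradientAt_sq' σ 0 u).hasFDerivAt
    have Hsum := (((H1.add H2).add H3).add H4).sub H5
    rw [hasGradientAt_iff_hasFDerivAt]
    convert Hsum using 1
    · rfl
    · rfl
    · rfl
    simp only [hh'def, map_add, map_sub]
  have hmono : ∀ u v, 0 ≤ ⟪h' u - h' v, u - v⟫ := by
    intro u v
    have hexp : h' u - h' v = (f' u - f' v) + ρ • (ContinuousLinearMap.adjoint A) (A (u - v))
        + (μ - σ) • (u - v) := by
      simp only [hh'def, map_sub, smul_sub, sub_smul, sub_zero]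
      abel
    rw [hexp, inner_add_left, inner_add_left, real_inner_smul_left, real_inner_smul_left,
      ContinuousLinearMap.adjoint_inner_left]
    have e1 : ⟪A (u - v), A (u - v)⟫ = ‖A (u - v)‖^2 := real_inner_self_eq_norm_sq _
    have e2 : ⟪u - v, u - v⟫ = ‖u - v‖^2 := real_inner_self_eq_norm_sq _
    have e3 : μ - σ = Lf := by simp [hσdef]
    have e4 : |⟪f' u - f' v, u - v⟫| ≤ ‖f' u - f' v‖ * ‖u - v‖ := abs_real_inner_le_norm _ _
    have e5 := hlip u v
    have e6 : -(Lf * ‖u - v‖ * ‖u - v‖) ≤ ⟪f' u - f' v, u - v⟫ := by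
      have := neg_abs_le (⟪f' u - f' v, u - v⟫)
      nlinarith [mul_le_mul_of_nonneg_right e5 (norm_nonneg (u - v)), norm_nonneg (u - v),
        norm_nonneg (f' u - f' v)]
    rw [e1, e2, e3]
    nlinarith [sq_nonneg ‖A (u - v)‖, sq_nonneg ‖u - v‖]
  have htan := tangent_of_monotone_grad h h' hgrad hmono
  have hconv : ConvexOn ℝ Set.univ h := convexOn_of_tangent h h' htan
  -- the jointly convex function Ψ
  set Ψ : E → E → ℝ := fun u x => h u + c/2 * ‖u - t • x‖^2 with hΨdef
  -- key identity
  have hkey : ∀ (u x : E), K u y z + lam/2 * ‖u - x‖^2 = Ψ u x + γ/2 * ‖x‖^2 := by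
    intro u x
    rw [hK, hΨdef, hhdef]
    simp only [sub_zero]
    have e1 : ‖u - x‖^2 = ‖u‖^2 - 2 * ⟪u, x⟫ + ‖x‖^2 := norm_sub_sq_real u x
    have e2 : ‖u - t • x‖^2 = ‖u‖^2 - 2 * (t * ⟪u, x⟫) + t^2 * ‖x‖^2 := by
      rw [norm_sub_sq_real, real_inner_smul_right, norm_smul, Real.norm_eq_abs,
        abs_of_nonneg ht, mul_pow]
    have hγ' : γ = σ * lam / c := by rw [hγ]
    rw [e1, e2, hγ', htdef]
    field_simp
    ring
  -- lower bound for Ψ, giving BddBelow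
  have hψ : ∀ u x : E, Ψ u x = h u + c/2 * ‖u - t • x‖^2 := fun u x => rfl
  clear_value σ c t h h' Ψ
  have hlb : ∀ (x u : E), h 0 - (‖h' 0‖ + c * ‖t • x‖)^2 / (2 * c) ≤ Ψ u x := by
    intro x u
    rw [hψ]
    have h1 : h 0 + ⟪h' 0, u - 0⟫ ≤ h u := htan 0 u
    rw [sub_zero] at h1
    have h2 : -(‖h' 0‖ * ‖u‖) ≤ ⟪h' 0, u⟫ := by
      have := abs_real_inner_le_norm (h' 0) u
      cases' abs_le.mp this with hl hr
      linarith
    have h3 : ‖u‖^2 - 2 * (‖u‖ * ‖t • x‖) ≤ ‖u - t • x‖^2 := by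
      rw [norm_sub_sq_real]
      have hcs := real_inner_le_norm u (t • x)
      nlinarith [sq_nonneg ‖t • x‖]
    have h3' : c/2 * (‖u‖^2 - 2 * (‖u‖ * ‖t • x‖)) ≤ c/2 * ‖u - t • x‖^2 :=
      mul_le_mul_of_nonneg_left h3 (by positivity)
    have h5 : -((‖h' 0‖ + c * ‖t • x‖)^2 / (2 * c))
        ≤ c/2 * ‖u‖^2 - (‖h' 0‖ + c * ‖t • x‖) * ‖u‖ := by
      have hid : c/2 * ‖u‖^2 - (‖h' 0‖ + c * ‖t • x‖) * ‖u‖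
          + (‖h' 0‖ + c * ‖t • x‖)^2 / (2 * c)
          = (c * ‖u‖ - (‖h' 0‖ + c * ‖t • x‖))^2 / (2 * c) := by
        field_simp
        ring
      have hpos : 0 ≤ (c * ‖u‖ - (‖h' 0‖ + c * ‖t • x‖))^2 / (2 * c) := by positivity
      linarith
    nlinarith [h1, h2, h3', h5]
  have hbdd : ∀ x : E, BddBelow (Set.range fun u : X => Ψ u x) := by
    intro x
    exact ⟨h 0 - (‖h' 0‖ + c * ‖t • x‖)^2 / (2 * c), by rintro r ⟨u, rfl⟩; exact hlb x u⟩
  -- rewrite φ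
  have hφ' : ∀ x : E, φ x - γ/2 * ‖x‖^2 = ⨅ u : X, Ψ u x := by
    intro x
    rw [hφ]
    have : (fun u : X => K u y z + lam/2 * ‖(u : E) - x‖^2)
        = fun u : X => Ψ u x + γ/2 * ‖x‖^2 := by
      funext u; exact hkey u x
    rw [show (⨅ u : X, (K u y z + lam/2 * ‖(u : E) - x‖^2)) = ⨅ u : X, (Ψ u x + γ/2 * ‖x‖^2)
      from by rw [this]]
    rw [iInf_add_const' (hbdd x)]
    ring
  refine ⟨convex_univ, fun x1 _ x2 _ a b2 ha hb hab => ?_⟩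
  simp only [smul_eq_mul]
  have hφ1 := hφ' x1
  have hφ2 := hφ' x2
  have hφ3 := hφ' (a • x1 + b2 • x2)
  rw [hφ3, hφ1, hφ2]
  apply le_add_eps'
  intro ε hε
  obtain ⟨u1, hu1⟩ := exists_lt_of_ciInf_lt (lt_add_of_pos_right (⨅ u : X, Ψ u x1) hε)
  obtain ⟨u2, hu2⟩ := exists_lt_of_ciInf_lt (lt_add_of_pos_right (⨅ u : X, Ψ u x2) hε)
  have hmem : a • (u1 : E) + b2 • (u2 : E) ∈ X := hXcv u1.2 u2.2 ha hb hab
  have step1 : (⨅ u : X, Ψ u (a • x1 + b2 • x2)) ≤ Ψ (a • (u1 : E) + b2 • (u2 : E))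
      (a • x1 + b2 • x2) := by
    exact ciInf_le (hbdd _) (⟨_, hmem⟩ : X)
  have step2 : Ψ (a • (u1 : E) + b2 • (u2 : E)) (a • x1 + b2 • x2)
      ≤ a * Ψ u1 x1 + b2 * Ψ u2 x2 := by
    have hh : h (a • (u1 : E) + b2 • (u2 : E)) ≤ a * h u1 + b2 * h u2 := by
      have := hconv.2 (Set.mem_univ (u1 : E)) (Set.mem_univ (u2 : E)) ha hb hab
      simpa using this
    have hvec : (a • (u1 : E) + b2 • (u2 : E)) - t • (a • x1 + b2 • x2)
        = a • ((u1 : E) - t • x1) + b2 • ((u2 : E) - t • x2) := by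
      module
    have hnorm : ‖(a • (u1 : E) + b2 • (u2 : E)) - t • (a • x1 + b2 • x2)‖
        ≤ a * ‖(u1 : E) - t • x1‖ + b2 * ‖(u2 : E) - t • x2‖ := by
      rw [hvec]
      refine le_trans (norm_add_le _ _) ?_
      rw [norm_smul, norm_smul, Real.norm_eq_abs, Real.norm_eq_abs, abs_of_nonneg ha,
        abs_of_nonneg hb]
    have hsq : ‖(a • (u1 : E) + b2 • (u2 : E)) - t • (a • x1 + b2 • x2)‖^2
        ≤ a * ‖(u1 : E) - t • x1‖^2 + b2 * ‖(u2 : E) - t • x2‖^2 := by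
      have h0 := norm_nonneg ((a • (u1 : E) + b2 • (u2 : E)) - t • (a • x1 + b2 • x2))
      have hsq1 : ‖(a • (u1 : E) + b2 • (u2 : E)) - t • (a • x1 + b2 • x2)‖^2
          ≤ (a * ‖(u1 : E) - t • x1‖ + b2 * ‖(u2 : E) - t • x2‖)^2 :=
        pow_le_pow_left₀ h0 hnorm 2
      have hcv := (Even.convexOn_pow (n := 2) even_two).2 (Set.mem_univ ‖(u1 : E) - t • x1‖)
        (Set.mem_univ ‖(u2 : E) - t • x2‖) ha hb hab
      simp only [smul_eq_mul] at hcv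
      linarith
    rw [hψ, hψ, hψ]
    have hc2 := mul_le_mul_of_nonneg_left hsq (le_of_lt (half_pos hc))
    nlinarith [hh, hc2]
  calc (⨅ u : X, Ψ u (a • x1 + b2 • x2))
      ≤ a * Ψ u1 x1 + b2 * Ψ u2 x2 := le_trans step1 step2
    _ ≤ a * ((⨅ u : X, Ψ u x1) + ε) + b2 * ((⨅ u : X, Ψ u x2) + ε) := by
        have l1 := mul_le_mul_of_nonneg_left (le_of_lt hu1) ha
        have l2 := mul_le_mul_of_nonneg_left (le_of_lt hu2) hb
        linarith
    _ = a * (⨅ u : X, Ψ u x1) + b2 * (⨅ u : X, Ψ u x2) + ε := by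
        linear_combination ε * hab
end

section
/- Let y ∈ F with y ≠ 0, let r > 0, and fix z ∈ E. Suppose x̃ ∈ X satisfies Ax̃ − b = −(r/‖y‖)·y. Suppose the feasible set S = {w ∈ X : Aw = b} is nonempty, x̄ ∈ S minimizes w ↦ f(w) + (μ/2)‖w − z‖² over S, and x_d ∈ X minimizes w ↦ K(w, y, z) over X. Suppose M ∈ ℝ satisfies |f(x̄)| + (μ/2)‖x̄ − z‖² ≤ M and |f(x̃)| + (μ/2)‖x̃ − z‖² + (ρ/2)‖Ax̃ − b‖² ≤ M. Then r·‖y‖ ≤ [f(x̄) + (μ/2)‖x̄ − z‖²] − K(x_d, y, z) + 2M. -/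
open MeasureTheory
open scoped RealInnerProductSpace

theorem stmt_15
    {E F : Type*}
    [NormedAddCommGroup E] [InnerProductSpace ℝ E] [FiniteDimensional ℝ E]
    [NormedAddCommGroup F] [InnerProductSpace ℝ F] [FiniteDimensional ℝ F]
    (A : E →L[ℝ] F) (b : F) (X : Set E)
    (hXne : X.Nonempty) (hXcl : IsClosed X) (hXcv : Convex ℝ X)
    (f : E → ℝ) (f' : E → E) (Lf : ℝ) (hLf : 0 ≤ Lf)
    (hf : ∀ x, HasGradientAt f (f' x) x)
    (hlip : ∀ u v, ‖f' u - f' v‖ ≤ Lf * ‖u - v‖)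
    (ρ μ : ℝ) (hρ : 0 ≤ ρ) (hμ : 0 < μ)
    (K : E → F → E → ℝ)
    (hK : ∀ x y z, K x y z =
      f x + ⟪A x - b, y⟫ + (ρ/2) * ‖A x - b‖^2 + (μ/2) * ‖x - z‖^2)
    (y : F) (hy : y ≠ 0) (r : ℝ) (hr : 0 < r) (z : E)
    (xt : E) (hxt : xt ∈ X) (hxteq : A xt - b = -((r/‖y‖) • y))
    (hfeas : ∃ w ∈ X, A w = b)
    (xbar : E)
    (hxbar : (xbar ∈ X ∧ A xbar = b) ∧ ∀ w, w ∈ X → A w = b →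
      f xbar + (μ/2) * ‖xbar - z‖^2 ≤ f w + (μ/2) * ‖w - z‖^2)
    (xd : E) (hxd : xd ∈ X ∧ ∀ w ∈ X, K xd y z ≤ K w y z)
    (M : ℝ)
    (hM1 : |f xbar| + (μ/2) * ‖xbar - z‖^2 ≤ M)
    (hM2 : |f xt| + (μ/2) * ‖xt - z‖^2 + (ρ/2) * ‖A xt - b‖^2 ≤ M) :
    r * ‖y‖ ≤ (f xbar + (μ/2) * ‖xbar - z‖^2) - K xd y z + 2*M := by
  have hKxd := hxd.2 xt hxt
  rw [hK, hK] at hKxd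
  have hyn : ‖y‖ ≠ 0 := norm_ne_zero_iff.2 hy
  have hin : ⟪A xt - b, y⟫ = -(r * ‖y‖) := by
    rw [hxteq, inner_neg_left, real_inner_smul_left, real_inner_self_eq_norm_sq]
    field_simp
  rw [hin] at hKxd
  have h1 : f xt ≤ |f xt| := le_abs_self _
  have h2 : -|f xbar| ≤ f xbar := neg_abs_le _
  have h3 : (0:ℝ) ≤ (μ/2) * ‖xbar - z‖^2 :=
    mul_nonneg (by linarith) (sq_nonneg _)
  rw [hK]
  linarith
end

section
/- Let L_K = L_f + ρ‖A‖² + μ and let τ > 0. Fix x ∈ X, y ∈ F, z ∈ E and g ∈ E; set G = g + A*y + ρA*(Ax − b) + μ(x − z) and x⁺ = proj_X(x − τ·G). Then K(x⁺, y, z) − K(x, y, z) ≤ (τ/2)·‖∇f(x) − g‖² − (1/(2τ) − L_K/2)·‖x⁺ − x‖². -/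
open MeasureTheory
open scoped RealInnerProductSpace

lemma descent_lemma
    {E : Type*} [NormedAddCommGroup E] [InnerProductSpace ℝ E] [CompleteSpace E]
    (f : E → ℝ) (f' : E → E) (Lf : ℝ)
    (hf : ∀ x, HasGradientAt f (f' x) x)
    (hlip : ∀ u v, ‖f' u - f' v‖ ≤ Lf * ‖u - v‖)
    (x d : E) : f (x + d) ≤ f x + ⟪f' x, d⟫ + Lf / 2 * ‖d‖ ^ 2 := by
  set φ : ℝ → ℝ := fun t => f (x + t • d) - t * ⟪f' x, d⟫ - t ^ 2 * (Lf / 2 * ‖d‖ ^ 2) with hφ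
  have hline : ∀ t : ℝ, HasDerivAt (fun s : ℝ => x + s • d) d t := by
    intro t
    simpa using ((hasDerivAt_id t).smul_const d).const_add x
  have hder : ∀ t : ℝ, HasDerivAt φ
      (⟪f' (x + t • d), d⟫ - ⟪f' x, d⟫ - 2 * t * (Lf / 2 * ‖d‖ ^ 2)) t := by
    intro t
    have h1 : HasDerivAt (fun s : ℝ => f (x + s • d)) ⟪f' (x + t • d), d⟫ t := by
      have := (hf (x + t • d)).hasFDerivAt.comp_hasDerivAt t (hline t)
      simp only [InnerProductSpace.toDual_apply_apply] at this; exact this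
    have h2 : HasDerivAt (fun s : ℝ => s * ⟪f' x, d⟫) ⟪f' x, d⟫ t := by
      simpa using (hasDerivAt_id t).mul_const ⟪f' x, d⟫
    have h3 : HasDerivAt (fun s : ℝ => s ^ 2 * (Lf / 2 * ‖d‖ ^ 2))
        (2 * t * (Lf / 2 * ‖d‖ ^ 2)) t := by
      have := (hasDerivAt_pow 2 t).mul_const (Lf / 2 * ‖d‖ ^ 2)
      simpa [mul_comm, mul_assoc] using this
    exact (h1.sub h2).sub h3
  have hmono : AntitoneOn φ (Set.Icc (0:ℝ) 1) := by
    apply antitoneOn_of_deriv_nonpos (convex_Icc 0 1)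
    · exact fun t _ => (hder t).continuousAt.continuousWithinAt
    · exact fun t _ => (hder t).differentiableAt.differentiableWithinAt
    · intro t ht
      rw [(hder t).deriv]
      rw [interior_Icc] at ht
      have hinner : ⟪f' (x + t • d) - f' x, d⟫ ≤ Lf * t * ‖d‖ ^ 2 := by
        calc ⟪f' (x + t • d) - f' x, d⟫ ≤ ‖f' (x + t • d) - f' x‖ * ‖d‖ :=
              real_inner_le_norm _ _
          _ ≤ (Lf * ‖(x + t • d) - x‖) * ‖d‖ := by
              gcongr; exact hlip _ _
          _ = Lf * t * ‖d‖ ^ 2 := by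
              rw [add_sub_cancel_left, norm_smul, Real.norm_eq_abs,
                abs_of_pos ht.1]; ring
      have : ⟪f' (x + t • d), d⟫ - ⟪f' x, d⟫ ≤ Lf * t * ‖d‖ ^ 2 := by
        rw [← inner_sub_left]; exact hinner
      nlinarith
  have h01 := hmono (Set.left_mem_Icc.mpr zero_le_one) (Set.right_mem_Icc.mpr zero_le_one)
    zero_le_one
  simp only [hφ] at h01
  simp at h01
  linarith

lemma proj_vi {E : Type*} [NormedAddCommGroup E] [InnerProductSpace ℝ E]
    (X : Set E) (hXcv : Convex ℝ X) (w p : E) (hp : p ∈ X)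
    (hmin : ∀ v ∈ X, ‖w - p‖ ≤ ‖w - v‖) :
    ∀ v ∈ X, ⟪w - p, v - p⟫ ≤ 0 := by
  have : ‖w - p‖ = ⨅ v : X, ‖w - v‖ := by
    haveI : Nonempty X := ⟨⟨p, hp⟩⟩
    refine le_antisymm (le_ciInf fun v => hmin v v.2) ?_
    exact ciInf_le ⟨0, fun _ ⟨_, h⟩ => h ▸ norm_nonneg _⟩ (⟨p, hp⟩ : X)
  exact (norm_eq_iInf_iff_real_inner_le_zero hXcv hp).mp this

set_option maxHeartbeats 1000000 in
theorem stmt_16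
    {E F : Type*}
    [NormedAddCommGroup E] [InnerProductSpace ℝ E] [FiniteDimensional ℝ E]
    [NormedAddCommGroup F] [InnerProductSpace ℝ F] [FiniteDimensional ℝ F]
    (A : E →L[ℝ] F) (b : F) (X : Set E)
    (hXne : X.Nonempty) (hXcl : IsClosed X) (hXcv : Convex ℝ X)
    (f : E → ℝ) (f' : E → E) (Lf : ℝ) (hLf : 0 ≤ Lf)
    (hf : ∀ x, HasGradientAt f (f' x) x)
    (hlip : ∀ u v, ‖f' u - f' v‖ ≤ Lf * ‖u - v‖)
    (ρ μ : ℝ) (hρ : 0 ≤ ρ) (hμ : 0 < μ)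
    (K : E → F → E → ℝ)
    (hK : ∀ x y z, K x y z =
      f x + ⟪A x - b, y⟫ + (ρ/2) * ‖A x - b‖^2 + (μ/2) * ‖x - z‖^2)
    (proj : E → E)
    (hproj : ∀ w, proj w ∈ X ∧ ∀ v ∈ X, ‖w - proj w‖ ≤ ‖w - v‖)
    (τ : ℝ) (hτ : 0 < τ)
    (x : E) (hx : x ∈ X) (y : F) (z : E) (g : E)
    (G : E) (hG : G = g + ContinuousLinearMap.adjoint A y
      + ρ • ContinuousLinearMap.adjoint A (A x - b) + μ • (x - z))
    (xp : E) (hxp : xp = proj (x - τ • G)) :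
    K xp y z - K x y z
      ≤ (τ/2) * ‖f' x - g‖^2 - (1/(2*τ) - (Lf + ρ * ‖A‖^2 + μ)/2) * ‖xp - x‖^2 := by
  set d := xp - x with hd
  -- descent for f
  have hdesc : f xp ≤ f x + ⟪f' x, d⟫ + Lf / 2 * ‖d‖ ^ 2 := by
    have := descent_lemma f f' Lf hf hlip x d
    simpa [hd] using this
  -- quadratic expansions
  have eA : A xp - b = (A x - b) + A d := by rw [hd, map_sub]; abel
  have ez : xp - z = (x - z) + d := by rw [hd]; abel
  have hnormA : ‖A xp - b‖ ^ 2 = ‖A x - b‖ ^ 2 + 2 * ⟪A x - b, A d⟫ + ‖A d‖ ^ 2 := by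
    rw [eA, norm_add_sq_real]
  have hnormz : ‖xp - z‖ ^ 2 = ‖x - z‖ ^ 2 + 2 * ⟪x - z, d⟫ + ‖d‖ ^ 2 := by
    rw [ez, norm_add_sq_real]
  have hinnA : ⟪A xp - b, y⟫ = ⟪A x - b, y⟫ + ⟪A d, y⟫ := by
    rw [eA, inner_add_left]
  have hAd : ‖A d‖ ^ 2 ≤ ‖A‖ ^ 2 * ‖d‖ ^ 2 := by
    have h1 := A.le_opNorm d
    nlinarith [norm_nonneg (A d), norm_nonneg d, A.opNorm_nonneg]
  have hGd : ⟪G, d⟫ = ⟪g, d⟫ + ⟪A d, y⟫ + ρ * ⟪A x - b, A d⟫ + μ * ⟪x - z, d⟫ := by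
    rw [hG]
    rw [inner_add_left, inner_add_left, inner_add_left, real_inner_smul_left,
      real_inner_smul_left, ContinuousLinearMap.adjoint_inner_left,
      ContinuousLinearMap.adjoint_inner_left]
    rw [real_inner_comm y (A d)]
  have hvi : ⟪(x - τ • G) - xp, x - xp⟫ ≤ 0 :=
    proj_vi X hXcv (x - τ • G) xp (hxp ▸ (hproj _).1)
      (fun v hv => hxp ▸ (hproj _).2 v hv) x hx
  have hproj2 : ‖d‖ ^ 2 ≤ -(τ * ⟪G, d⟫) := by
    have e : (x - τ • G) - xp = -d - τ • G := by rw [hd]; abel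
    have e2 : x - xp = -d := by rw [hd]; abel
    rw [e, e2, inner_sub_left, real_inner_smul_left, inner_neg_neg,
      real_inner_self_eq_norm_sq, inner_neg_right] at hvi
    linarith
  have hyoung : 2 * τ * ⟪f' x - g, d⟫ ≤ τ ^ 2 * ‖f' x - g‖ ^ 2 + ‖d‖ ^ 2 := by
    have h0 : (0:ℝ) ≤ ‖τ • (f' x - g) - d‖ ^ 2 := sq_nonneg _
    rw [norm_sub_sq_real, norm_smul, real_inner_smul_left, Real.norm_eq_abs,
      abs_of_pos hτ, mul_pow] at h0
    linarith
  have hsplit : ⟪f' x, d⟫ = ⟪f' x - g, d⟫ + ⟪g, d⟫ := by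
    rw [← inner_add_left]; simp
  rw [hsplit] at hdesc
  rw [hK, hK, hnormA, hnormz, hinnA]
  have h2τ : (0:ℝ) < 2 * τ := by positivity
  refine le_of_mul_le_mul_left ?_ h2τ
  have hc : 2 * τ * (1 / (2 * τ)) = 1 := by field_simp
  have hGd2 : τ * ⟪G, d⟫ ≤ -‖d‖ ^ 2 := by linarith
  nlinarith [hdesc, hGd2, hGd, hyoung,
    mul_le_mul_of_nonneg_left hAd (mul_nonneg hρ hτ.le), hc, hτ.le, hρ,
    sq_nonneg ‖d‖]
end

section
/- Let L_K = L_f + ρ‖A‖² + μ, let τ > 0, η ≥ 0 and 0 < β ≤ 1. Fix x ∈ X, y ∈ F, z ∈ E and g ∈ E. Set y' = y + η(Ax − b), z' = z + β(x − z), G = g + A*y' + ρA*(Ax − b) + μ(x − z), and x⁺ = proj_X(x − τ·G). Then K(x, y, z) − K(x⁺, y', z') ≥ −η·‖Ax − b‖² + (μ/β − 3μ/4)·‖z' − z‖² − (τ/2)·‖∇f(x) − g‖² + (1/(2τ) − L_K/2 − μ)·‖x⁺ − x‖². -/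
open MeasureTheory
open scoped RealInnerProductSpace

lemma my_descent {E : Type*} [NormedAddCommGroup E] [InnerProductSpace ℝ E] [CompleteSpace E]
    {φ : E → ℝ} {φ' : E → E} (hφ : ∀ u, HasGradientAt φ (φ' u) u)
    {L : ℝ} (hlip : ∀ u v, ‖φ' u - φ' v‖ ≤ L * ‖u - v‖)
    (a b : E) : φ b ≤ φ a + ⟪φ' a, b - a⟫ + L / 2 * ‖b - a‖ ^ 2 := by
  set d := b - a with hd
  set gf : ℝ → ℝ := fun t => φ (a + t • d) - t * ⟪φ' a, d⟫ - L / 2 * t ^ 2 * ‖d‖ ^ 2 with hgf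
  have key : ∀ t : ℝ, HasDerivAt gf
      (⟪φ' (a + t • d), d⟫ - ⟪φ' a, d⟫ - L * t * ‖d‖ ^ 2) t := by
    intro t
    have hc : HasDerivAt (fun s : ℝ => a + s • d) d t := by
      simpa using ((hasDerivAt_id t).smul_const d).const_add a
    have h1 : HasDerivAt (fun s : ℝ => φ (a + s • d)) ⟪φ' (a + t • d), d⟫ t := by
      have hF := hasGradientAt_iff_hasFDerivAt.mp (hφ (a + t • d))
      have h := hF.comp_hasDerivAt t hc
      simp only [InnerProductSpace.toDual_apply_apply] at h
      exact h
    have h2 : HasDerivAt (fun s : ℝ => s * ⟪φ' a, d⟫ + L / 2 * s ^ 2 * ‖d‖ ^ 2)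
        (⟪φ' a, d⟫ + L * t * ‖d‖ ^ 2) t := by
      have ha : HasDerivAt (fun s : ℝ => s * ⟪φ' a, d⟫) ⟪φ' a, d⟫ t := by
        simpa using (hasDerivAt_id t).mul_const ⟪φ' a, d⟫
      have hb : HasDerivAt (fun s : ℝ => L / 2 * s ^ 2 * ‖d‖ ^ 2)
          (L * t * ‖d‖ ^ 2) t := by
        have := ((hasDerivAt_pow 2 t).const_mul (L / 2)).mul_const (‖d‖ ^ 2)
        exact this.congr_deriv (by ring)
      exact ha.add hb
    have := h1.sub h2
    have e : gf = (fun s => φ (a + s • d)) - (fun s => s * ⟪φ' a, d⟫ + L / 2 * s ^ 2 * ‖d‖ ^ 2) := by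
      funext s; simp [hgf]; ring
    rw [e]
    exact this.congr_deriv (by ring)
  have hmono : AntitoneOn gf (Set.Icc (0:ℝ) 1) := by
    apply antitoneOn_of_deriv_nonpos (convex_Icc 0 1)
    · exact fun t _ => ((key t).continuousAt).continuousWithinAt
    · intro t _
      exact ((key t).differentiableAt).differentiableWithinAt
    · intro t ht
      rw [interior_Icc] at ht
      rw [(key t).deriv]
      have h1 : ⟪φ' (a + t • d) - φ' a, d⟫ ≤ ‖φ' (a + t • d) - φ' a‖ * ‖d‖ :=
        real_inner_le_norm _ _
      have h2 : ‖φ' (a + t • d) - φ' a‖ ≤ L * ‖t • d‖ := by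
        simpa using hlip (a + t • d) a
      have h3 : ‖t • d‖ = t * ‖d‖ := by
        rw [norm_smul, Real.norm_eq_abs, abs_of_pos ht.1]
      rw [h3] at h2
      have h4 : ⟪φ' (a + t • d) - φ' a, d⟫ ≤ L * t * ‖d‖ ^ 2 := by
        calc ⟪φ' (a + t • d) - φ' a, d⟫ ≤ ‖φ' (a + t • d) - φ' a‖ * ‖d‖ := h1
          _ ≤ L * (t * ‖d‖) * ‖d‖ := by
              apply mul_le_mul_of_nonneg_right h2 (norm_nonneg _)
          _ = L * t * ‖d‖ ^ 2 := by ring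
      rw [inner_sub_left] at h4
      linarith
  have h01 := hmono (Set.left_mem_Icc.mpr zero_le_one) (Set.right_mem_Icc.mpr zero_le_one)
    zero_le_one
  have e0 : gf 0 = φ a := by simp [hgf]
  have e1 : gf 1 = φ b - ⟪φ' a, d⟫ - L / 2 * ‖d‖ ^ 2 := by
    simp [hgf, hd]
  rw [e0, e1] at h01
  linarith

lemma my_grad {E F : Type*}
    [NormedAddCommGroup E] [InnerProductSpace ℝ E] [CompleteSpace E]
    [NormedAddCommGroup F] [InnerProductSpace ℝ F] [CompleteSpace F]
    (A : E →L[ℝ] F) (b : F) (f : E → ℝ) (f' : E → E)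
    (hf : ∀ x, HasGradientAt f (f' x) x)
    (ρ μ : ℝ) (y' : F) (z' : E) (u : E) :
    HasGradientAt (fun u => f u + ⟪A u - b, y'⟫ + (ρ/2) * ‖A u - b‖^2 + (μ/2) * ‖u - z'‖^2)
      (f' u + ContinuousLinearMap.adjoint A y'
        + ρ • ContinuousLinearMap.adjoint A (A u - b) + μ • (u - z')) u := by
  have heq : (fun u => f u + ⟪A u - b, y'⟫ + (ρ/2) * ‖A u - b‖^2 + (μ/2) * ‖u - z'‖^2)
      = fun u => f u + ⟪A u - b, y'⟫ + (ρ/2) * ⟪A u - b, A u - b⟫ + (μ/2) * ⟪u - z', u - z'⟫ := by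
    funext v
    rw [real_inner_self_eq_norm_sq, real_inner_self_eq_norm_sq]
  rw [heq, hasGradientAt_iff_hasFDerivAt]
  have hA : HasFDerivAt (fun u : E => A u - b) (A : E →L[ℝ] F) u := A.hasFDerivAt.sub_const b
  have hid : HasFDerivAt (fun u : E => u - z') (ContinuousLinearMap.id ℝ E) u :=
    (hasFDerivAt_id u).sub_const z'
  have hF := hasGradientAt_iff_hasFDerivAt.mp (hf u)
  have h1 := HasFDerivAt.inner ℝ hA (hasFDerivAt_const y' u)
  have h2 := (HasFDerivAt.inner ℝ hA hA).const_mul (ρ/2)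
  have h3 := (HasFDerivAt.inner ℝ hid hid).const_mul (μ/2)
  have htot := ((hF.add h1).add h2).add h3
  refine (htot.congr_fderiv ?_)
  ext v
  simp [InnerProductSpace.toDual_apply_apply, fderivInnerCLM_apply, inner_add_left,
    inner_smul_left, ContinuousLinearMap.adjoint_inner_left, inner_sub_left, inner_sub_right]
  rw [real_inner_comm (A v) (A u), real_inner_comm v u, real_inner_comm v z',
    real_inner_comm (A v) b, real_inner_comm (A v) y']
  ring

set_option maxHeartbeats 1000000 in
theorem stmt_17
    {E F : Type*}
    [NormedAddCommGroup E] [InnerProductSpace ℝ E] [FiniteDimensional ℝ E]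
    [NormedAddCommGroup F] [InnerProductSpace ℝ F] [FiniteDimensional ℝ F]
    (A : E →L[ℝ] F) (b : F) (X : Set E)
    (hXne : X.Nonempty) (hXcl : IsClosed X) (hXcv : Convex ℝ X)
    (f : E → ℝ) (f' : E → E) (Lf : ℝ) (hLf : 0 ≤ Lf)
    (hf : ∀ x, HasGradientAt f (f' x) x)
    (hlip : ∀ u v, ‖f' u - f' v‖ ≤ Lf * ‖u - v‖)
    (ρ μ : ℝ) (hρ : 0 ≤ ρ) (hμ : 0 < μ)
    (K : E → F → E → ℝ)
    (hK : ∀ x y z, K x y z =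
      f x + ⟪A x - b, y⟫ + (ρ/2) * ‖A x - b‖^2 + (μ/2) * ‖x - z‖^2)
    (proj : E → E)
    (hproj : ∀ w, proj w ∈ X ∧ ∀ v ∈ X, ‖w - proj w‖ ≤ ‖w - v‖)
    (τ η β : ℝ) (hτ : 0 < τ) (hη : 0 ≤ η) (hβ0 : 0 < β) (hβ1 : β ≤ 1)
    (x : E) (hx : x ∈ X) (y : F) (z : E) (g : E)
    (y' : F) (hy' : y' = y + η • (A x - b))
    (z' : E) (hz' : z' = z + β • (x - z))
    (G : E) (hG : G = g + ContinuousLinearMap.adjoint A y'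
      + ρ • ContinuousLinearMap.adjoint A (A x - b) + μ • (x - z))
    (xp : E) (hxp : xp = proj (x - τ • G)) :
    K x y z - K xp y' z'
      ≥ -η * ‖A x - b‖^2 + (μ/β - 3*μ/4) * ‖z' - z‖^2
        - (τ/2) * ‖f' x - g‖^2
        + (1/(2*τ) - (Lf + ρ * ‖A‖^2 + μ)/2 - μ) * ‖xp - x‖^2 := by
  classical
  -- the gradient field of u ↦ K u y' z'
  set Φ : E → E := fun u => f' u + ContinuousLinearMap.adjoint A y'
      + ρ • ContinuousLinearMap.adjoint A (A u - b) + μ • (u - z') with hΦ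
  have hgrad : ∀ u, HasGradientAt (fun u => K u y' z') (Φ u) u := by
    intro u
    have heq : (fun u => K u y' z')
        = fun u => f u + ⟪A u - b, y'⟫ + (ρ/2) * ‖A u - b‖^2 + (μ/2) * ‖u - z'‖^2 :=
      funext fun u => hK u y' z'
    rw [heq]
    exact my_grad A b f f' hf ρ μ y' z' u
  -- Lipschitz bound for Φ
  have hAadj : ‖ContinuousLinearMap.adjoint A‖ = ‖A‖ :=
    LinearIsometryEquiv.norm_map ContinuousLinearMap.adjoint A
  have hΦlip : ∀ u v, ‖Φ u - Φ v‖ ≤ (Lf + ρ * ‖A‖^2 + μ) * ‖u - v‖ := by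
    intro u v
    have hsplit : Φ u - Φ v = (f' u - f' v)
        + ρ • ContinuousLinearMap.adjoint A (A (u - v)) + μ • (u - v) := by
      simp only [hΦ, map_sub, smul_sub]
      abel
    have h2 : ‖ρ • ContinuousLinearMap.adjoint A (A (u - v))‖ ≤ ρ * ‖A‖^2 * ‖u - v‖ := by
      rw [norm_smul, Real.norm_eq_abs, abs_of_nonneg hρ]
      have ha : ‖ContinuousLinearMap.adjoint A (A (u - v))‖ ≤ ‖A‖ * ‖A (u - v)‖ := by
        calc ‖ContinuousLinearMap.adjoint A (A (u - v))‖
            ≤ ‖ContinuousLinearMap.adjoint A‖ * ‖A (u - v)‖ :=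
              (ContinuousLinearMap.adjoint A).le_opNorm _
          _ = ‖A‖ * ‖A (u - v)‖ := by rw [hAadj]
      have hb : ‖A (u - v)‖ ≤ ‖A‖ * ‖u - v‖ := A.le_opNorm _
      calc ρ * ‖ContinuousLinearMap.adjoint A (A (u - v))‖
          ≤ ρ * (‖A‖ * ‖A (u - v)‖) := by
            exact mul_le_mul_of_nonneg_left ha hρ
        _ ≤ ρ * (‖A‖ * (‖A‖ * ‖u - v‖)) := by
            apply mul_le_mul_of_nonneg_left _ hρ
            exact mul_le_mul_of_nonneg_left hb (norm_nonneg _)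
        _ = ρ * ‖A‖^2 * ‖u - v‖ := by ring
    have h3 : ‖μ • (u - v)‖ = μ * ‖u - v‖ := by
      rw [norm_smul, Real.norm_eq_abs, abs_of_pos hμ]
    calc ‖Φ u - Φ v‖
        ≤ ‖f' u - f' v‖ + ‖ρ • ContinuousLinearMap.adjoint A (A (u - v))‖
          + ‖μ • (u - v)‖ := by rw [hsplit]; exact norm_add₃_le
      _ ≤ Lf * ‖u - v‖ + ρ * ‖A‖^2 * ‖u - v‖ + μ * ‖u - v‖ := by
          have := hlip u v
          linarith [h2, h3.le]
      _ = (Lf + ρ * ‖A‖^2 + μ) * ‖u - v‖ := by ring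
  -- descent inequality
  have hdes : K xp y' z' ≤ K x y' z' + ⟪Φ x, xp - x⟫
      + (Lf + ρ * ‖A‖^2 + μ) / 2 * ‖xp - x‖ ^ 2 :=
    my_descent hgrad hΦlip x xp
  -- variational inequality of the projection
  have hVI : ∀ w, ∀ v ∈ X, ⟪w - proj w, v - proj w⟫ ≤ 0 := by
    intro w v hv
    haveI : Nonempty X := ⟨⟨x, hx⟩⟩
    have h1 : ‖w - proj w‖ = ⨅ q : X, ‖w - q‖ := by
      apply le_antisymm
      · exact le_ciInf fun q => (hproj w).2 q q.2
      · exact ciInf_le ⟨0, by rintro r ⟨q, rfl⟩; exact norm_nonneg _⟩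
          (⟨proj w, (hproj w).1⟩ : X)
    exact (norm_eq_iInf_iff_real_inner_le_zero hXcv (hproj w).1).mp h1 v hv
  have hG1 : ‖xp - x‖ ^ 2 + τ * ⟪G, xp - x⟫ ≤ 0 := by
    have hv0 : ⟪(x - τ • G) - xp, x - xp⟫ ≤ 0 := by
      rw [hxp]; exact hVI (x - τ • G) x hx
    have e : (x - τ • G) - xp = (x - xp) - τ • G := by abel
    rw [e, inner_sub_left, real_inner_smul_left, real_inner_self_eq_norm_sq] at hv0
    have h5 : ⟪G, x - xp⟫ = -⟪G, xp - x⟫ := by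
      rw [show x - xp = -(xp - x) by abel, inner_neg_right]
    have h6 : ‖x - xp‖ = ‖xp - x‖ := norm_sub_rev _ _
    rw [h5, h6] at hv0
    linarith
  have hG2 : ⟪G, xp - x⟫ ≤ -(1/τ) * ‖xp - x‖ ^ 2 := by
    rw [neg_mul, le_neg]
    rw [show (1/τ) * ‖xp - x‖^2 = ‖xp - x‖^2 / τ by ring]
    rw [div_le_iff₀ hτ]
    nlinarith [hG1]
  -- decomposition of Φ x
  have hΦx : Φ x = G + (f' x - g) - μ • (z' - z) := by
    rw [hΦ, hG, hz']
    module
  have hinner : ⟪Φ x, xp - x⟫ = ⟪G, xp - x⟫ + ⟪f' x - g, xp - x⟫ - μ * ⟪z' - z, xp - x⟫ := by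
    rw [hΦx]
    simp [inner_add_left, inner_sub_left, real_inner_smul_left]
  -- Young inequalities
  have hY1 : ⟪f' x - g, xp - x⟫ ≤ τ/2 * ‖f' x - g‖^2 + 1/(2*τ) * ‖xp - x‖^2 := by
    have ha := real_inner_le_norm (f' x - g) (xp - x)
    have hb : (0:ℝ) ≤ 1/(2*τ) * (τ * ‖f' x - g‖ - ‖xp - x‖)^2 := by positivity
    have hc : 1/(2*τ) * (τ * ‖f' x - g‖ - ‖xp - x‖)^2
        = τ/2 * ‖f' x - g‖^2 + 1/(2*τ) * ‖xp - x‖^2 - ‖f' x - g‖ * ‖xp - x‖ := by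
      field_simp
      ring
    linarith
  have hY2 : -(μ * ⟪z' - z, xp - x⟫) ≤ μ/4 * ‖z' - z‖^2 + μ * ‖xp - x‖^2 := by
    have ha : -⟪z' - z, xp - x⟫ ≤ ‖z' - z‖ * ‖xp - x‖ := by
      calc -⟪z' - z, xp - x⟫ = ⟪z - z', xp - x⟫ := by rw [← inner_neg_left, neg_sub]
        _ ≤ ‖z - z'‖ * ‖xp - x‖ := real_inner_le_norm _ _
        _ = ‖z' - z‖ * ‖xp - x‖ := by rw [norm_sub_rev]
    have hb : ‖z' - z‖ * ‖xp - x‖ ≤ 1/4 * ‖z' - z‖^2 + ‖xp - x‖^2 := by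
      nlinarith [sq_nonneg (‖z' - z‖/2 - ‖xp - x‖)]
    have hc := mul_le_mul_of_nonneg_left (ha.trans hb) hμ.le
    have hd : μ * -⟪z' - z, xp - x⟫ = -(μ * ⟪z' - z, xp - x⟫) := by ring
    rw [hd] at hc
    linarith
  -- identities for the first difference
  have e_y : ⟪A x - b, y⟫ - ⟪A x - b, y'⟫ = -η * ‖A x - b‖^2 := by
    rw [hy']
    rw [inner_add_right, real_inner_smul_right, real_inner_self_eq_norm_sq]
    ring
  have e_z1 : ‖x - z'‖^2 = (1-β)^2 * ‖x - z‖^2 := by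
    have h : x - z' = (1-β) • (x - z) := by rw [hz']; module
    rw [h, norm_smul, Real.norm_eq_abs, mul_pow, sq_abs]
  have e_z2 : ‖z' - z‖^2 = β^2 * ‖x - z‖^2 := by
    have h : z' - z = β • (x - z) := by rw [hz']; module
    rw [h, norm_smul, Real.norm_eq_abs, mul_pow, sq_abs]
  have hbeta : (μ/β - 3*μ/4) * ‖z' - z‖^2 = (μ*β - 3*μ/4*β^2) * ‖x - z‖^2 := by
    rw [e_z2]
    field_simp
  -- assemble
  rw [hK x y z]
  rw [hK x y' z', hinner, e_z1] at hdes
  rw [e_z2] at hY2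
  rw [hbeta]
  have hbridge : (1/τ) * ‖xp - x‖^2 = 1/(2*τ) * ‖xp - x‖^2 + 1/(2*τ) * ‖xp - x‖^2 := by
    field_simp
    ring
  linarith [hdes, hG2, hY1, hY2, e_y, hbridge]
end

section
/- Assume μ > L_f, let L_K = L_f + ρ‖A‖² + μ and 0 < τ ≤ 1/L_K. Fix x ∈ X, y ∈ F, z ∈ E and g ∈ E; set G = g + A*y + ρA*(Ax − b) + μ(x − z) and x⁺ = proj_X(x − τ·G), and let x* ∈ X minimize w ↦ K(w, y, z) over X. Then ‖x − x*‖ ≤ (1/(τ(μ − L_f)))·‖x − x⁺‖ + (1/(μ − L_f))·‖g − ∇f(x)‖. -/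
open MeasureTheory
open scoped RealInnerProductSpace

open scoped RealInnerProductSpace

section helpers

variable {E : Type*} [NormedAddCommGroup E] [InnerProductSpace ℝ E] [CompleteSpace E]

lemma hga_add' {φ ψ : E → ℝ} {Φ Ψ x : E} (h1 : HasGradientAt φ Φ x)
    (h2 : HasGradientAt ψ Ψ x) : HasGradientAt (fun w => φ w + ψ w) (Φ + Ψ) x := by
  rw [hasGradientAt_iff_hasFDerivAt] at h1 h2 ⊢
  rw [map_add]
  exact h1.add h2

lemma hga_neg' {φ : E → ℝ} {Φ x : E} (h : HasGradientAt φ Φ x) :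
    HasGradientAt (fun w => -φ w) (-Φ) x := by
  rw [hasGradientAt_iff_hasFDerivAt] at h ⊢
  rw [map_neg]
  exact h.neg

lemma hga_const_mul {φ : E → ℝ} {Φ x : E} (c : ℝ) (h : HasGradientAt φ Φ x) :
    HasGradientAt (fun w => c * φ w) (c • Φ) x := by
  rw [hasGradientAt_iff_hasFDerivAt] at h ⊢
  refine (h.const_mul c).congr_fderiv ?_
  ext u
  simp [real_inner_smul_left]

lemma hga_inner_const (c x : E) : HasGradientAt (fun w => ⟪c, w⟫) c x := by
  rw [hasGradientAt_iff_hasFDerivAt]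
  exact (InnerProductSpace.toDual ℝ E c).hasFDerivAt

lemma hga_sub' {φ ψ : E → ℝ} {Φ Ψ x : E} (h1 : HasGradientAt φ Φ x)
    (h2 : HasGradientAt ψ Ψ x) : HasGradientAt (fun w => φ w - ψ w) (Φ - Ψ) x := by
  have := hga_add' h1 (hga_neg' h2)
  simpa [sub_eq_add_neg] using this

lemma hga_sub_const {φ : E → ℝ} {Φ x : E} (h : HasGradientAt φ Φ x) (c : ℝ) :
    HasGradientAt (fun w => φ w - c) Φ x := by
  rw [hasGradientAt_iff_hasFDerivAt] at h ⊢
  exact h.sub_const c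

variable {F : Type*} [NormedAddCommGroup F] [InnerProductSpace ℝ F]
  [CompleteSpace F]

lemma hga_normsq_comp (A : E →L[ℝ] F) (b : F) (x : E) :
    HasGradientAt (fun w => ‖A w - b‖^2)
      ((2:ℝ) • ContinuousLinearMap.adjoint A (A x - b)) x := by
  have h1 : HasFDerivAt (fun w : E => A w - b) (A : E →L[ℝ] F) x :=
    A.hasFDerivAt.sub_const b
  have h2 := h1.inner ℝ h1
  have hfun : (fun w : E => ‖A w - b‖^2) = fun w : E => ⟪A w - b, A w - b⟫ := by
    funext w; rw [real_inner_self_eq_norm_sq]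
  rw [hasGradientAt_iff_hasFDerivAt, hfun]
  refine h2.congr_fderiv ?_
  ext u
  simp [fderivInnerCLM_apply, real_inner_smul_left, ContinuousLinearMap.adjoint_inner_left,
    real_inner_comm]
  rw [real_inner_comm (A x - b) (A u), inner_sub_left]
  ring

lemma hga_linear_inner (A : E →L[ℝ] F) (b : F) (y : F) (x : E) :
    HasGradientAt (fun w => ⟪A w - b, y⟫) (ContinuousLinearMap.adjoint A y) x := by
  have hfun : (fun w : E => ⟪A w - b, y⟫)
      = fun w : E => ⟪ContinuousLinearMap.adjoint A y, w⟫ - ⟪b, y⟫ := by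
    funext w
    rw [ContinuousLinearMap.adjoint_inner_left, inner_sub_left, real_inner_comm]
  rw [hfun]
  exact hga_sub_const (hga_inner_const _ x) _

end helpers
section quad

variable {E : Type*} [NormedAddCommGroup E] [InnerProductSpace ℝ E] [CompleteSpace E]

lemma quad_upper (φ : E → ℝ) (Φ : E → E) (hgrad : ∀ w, HasGradientAt φ (Φ w) w)
    (c : ℝ) (hc : ∀ u v, ⟪Φ u - Φ v, u - v⟫ ≤ c * ‖u - v‖^2)
    (u v : E) : φ v ≤ φ u + ⟪Φ u, v - u⟫ + c/2 * ‖v - u‖^2 := by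
  set d := v - u with hd
  have hline : ∀ t : ℝ, HasDerivAt (fun s : ℝ => φ (u + s • d)) ⟪Φ (u + t • d), d⟫ t := by
    intro t
    have h1 : HasDerivAt (fun s : ℝ => u + s • d) d t := by
      simpa using ((hasDerivAt_id t).smul_const d).const_add u
    have h2 := (hgrad (u + t • d)).hasFDerivAt.comp_hasDerivAt t h1
    simpa [InnerProductSpace.toDual_apply_apply, Function.comp_def] using h2
  set C1 : ℝ := ⟪Φ u, d⟫ with hC1
  set C2 : ℝ := c/2 * ‖d‖^2 with hC2
  set g : ℝ → ℝ := fun t => φ (u + t • d) - C1 * t - C2 * t^2 with hgdef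
  have hgd : ∀ t : ℝ, HasDerivAt g (⟪Φ (u + t • d), d⟫ - C1 - C2 * (2 * t)) t := by
    intro t
    have hq : HasDerivAt (fun s : ℝ => C2 * s^2) (C2 * (2 * t)) t := by
      simpa [mul_comm] using (hasDerivAt_pow 2 t).const_mul C2
    have hl : HasDerivAt (fun s : ℝ => C1 * s) C1 t := by
      simpa using (hasDerivAt_id t).const_mul C1
    exact ((hline t).sub hl).sub hq
  have hanti : AntitoneOn g (Set.Icc (0:ℝ) 1) := by
    apply antitoneOn_of_deriv_nonpos (convex_Icc 0 1)
    · exact fun t _ => (hgd t).continuousAt.continuousWithinAt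
    · intro t _
      exact ((hgd t).differentiableAt).differentiableWithinAt
    · intro t ht
      rw [interior_Icc] at ht
      rw [(hgd t).deriv]
      have hkey : ⟪Φ (u + t • d) - Φ u, t • d⟫ ≤ c * ‖t • d‖^2 := by
        simpa using hc (u + t • d) u
      rw [inner_sub_left, real_inner_smul_right, real_inner_smul_right, norm_smul] at hkey
      have ht0 : 0 < t := ht.1
      simp only [Real.norm_eq_abs, abs_of_pos ht0] at hkey
      have h5 : ⟪Φ (u + t • d), d⟫ - ⟪Φ u, d⟫ ≤ c * t * ‖d‖^2 := by nlinarith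
      rw [hC1, hC2]
      nlinarith
  have h01 : g 1 ≤ g 0 := hanti (Set.mem_Icc.2 ⟨le_refl 0, zero_le_one⟩)
    (Set.mem_Icc.2 ⟨zero_le_one, le_refl 1⟩) zero_le_one
  have hg0 : g 0 = φ u := by simp [hgdef]
  have hv : u + d = v := by rw [hd]; abel
  have hg1 : g 1 = φ v - C1 - C2 := by simp [hgdef, hv]
  rw [hg0, hg1] at h01
  rw [hC1, hC2] at h01
  linarith [h01]

lemma quad_lower (φ : E → ℝ) (Φ : E → E) (hgrad : ∀ w, HasGradientAt φ (Φ w) w)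
    (m : ℝ) (hm : ∀ u v, m * ‖u - v‖^2 ≤ ⟪Φ u - Φ v, u - v⟫)
    (u v : E) : φ u + ⟪Φ u, v - u⟫ + m/2 * ‖v - u‖^2 ≤ φ v := by
  have h := quad_upper (fun w => -φ w) (fun w => -(Φ w))
    (fun w => hga_neg' (hgrad w)) (-m) ?_ u v
  · have : ⟪-(Φ u), v - u⟫ = -⟪Φ u, v - u⟫ := inner_neg_left _ _
    rw [this] at h
    linarith
  · intro a b'
    have h1 := hm a b'
    have : -(Φ a) - -(Φ b') = -(Φ a - Φ b') := by abel
    rw [this, inner_neg_left]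
    linarith

lemma coco (φ : E → ℝ) (Φ : E → E) (hgrad : ∀ w, HasGradientAt φ (Φ w) w)
    (c : ℝ) (hc0 : 0 ≤ c)
    (hmono : ∀ u v, 0 ≤ ⟪Φ u - Φ v, u - v⟫)
    (hc : ∀ u v, ⟪Φ u - Φ v, u - v⟫ ≤ c * ‖u - v‖^2)
    (u v : E) : ‖Φ u - Φ v‖^2 ≤ c * ⟪Φ u - Φ v, u - v⟫ := by
  have key : ∀ c' : ℝ, c < c' → ‖Φ u - Φ v‖^2 ≤ c' * ⟪Φ u - Φ v, u - v⟫ := by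
    intro c' hcc'
    have hc'pos : 0 < c' := lt_of_le_of_lt hc0 hcc'
    have hcne : c' ≠ 0 := ne_of_gt hc'pos
    have half : ∀ p q : E, ‖Φ q - Φ p‖^2 ≤ (φ q - φ p - ⟪Φ p, q - p⟫) * (2*c') := by
      intro p q
      set ψ : E → ℝ := fun w => φ w - ⟪Φ p, w⟫ with hψ
      set Ψ : E → E := fun w => Φ w - Φ p with hΨ
      have eΨ : Φ q - Φ p = Ψ q := rfl
      have hgψ : ∀ w, HasGradientAt ψ (Ψ w) w :=
        fun w => hga_sub' (hgrad w) (hga_inner_const (Φ p) w)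
      have hΨdiff : ∀ a b' : E, Ψ a - Ψ b' = Φ a - Φ b' := by
        intro a b'; simp only [hΨ]; abel
      have hmψ : ∀ a b' : E, 0 ≤ ⟪Ψ a - Ψ b', a - b'⟫ := by
        intro a b'; rw [hΨdiff]; exact hmono a b'
      have hcψ : ∀ a b' : E, ⟪Ψ a - Ψ b', a - b'⟫ ≤ c' * ‖a - b'‖^2 := by
        intro a b'; rw [hΨdiff]
        exact (hc a b').trans (by nlinarith [sq_nonneg ‖a - b'‖])
      have hΨp : Ψ p = 0 := by rw [hΨ]; simp
      have hmin : ψ p ≤ ψ (q - c'⁻¹ • Ψ q) := by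
        have h0 := quad_lower ψ Ψ hgψ 0 (fun a b' => by simpa using hmψ a b') p
          (q - c'⁻¹ • Ψ q)
        simpa [hΨp] using h0
      have hdesc := quad_upper ψ Ψ hgψ c' hcψ q (q - c'⁻¹ • Ψ q)
      have e1 : q - c'⁻¹ • Ψ q - q = -(c'⁻¹ • Ψ q) := by abel
      rw [e1, inner_neg_right, real_inner_smul_right, real_inner_self_eq_norm_sq,
        norm_neg, norm_smul, Real.norm_eq_abs] at hdesc
      have e2 : (|c'⁻¹| * ‖Ψ q‖)^2 = c'⁻¹^2 * ‖Ψ q‖^2 := by rw [mul_pow, sq_abs]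
      rw [e2] at hdesc
      have e6 : c'/2 * (c'⁻¹^2 * ‖Ψ q‖^2) = c'⁻¹/2 * ‖Ψ q‖^2 := by
        field_simp
      rw [e6] at hdesc
      have hψq : ψ q - ψ p = φ q - φ p - ⟪Φ p, q - p⟫ := by
        simp only [hψ]
        rw [inner_sub_right]
        ring
      have hch := hmin.trans hdesc
      have h7 : (2*c') * (c'⁻¹/2 * ‖Ψ q‖^2) ≤ (2*c') * (ψ q - ψ p) :=
        mul_le_mul_of_nonneg_left (by linarith) (by linarith)
      have h8 : (2*c') * (c'⁻¹/2 * ‖Ψ q‖^2) = ‖Ψ q‖^2 := by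
        field_simp
      rw [eΨ]
      have h9 : (2*c') * (ψ q - ψ p) = (φ q - φ p - ⟪Φ p, q - p⟫) * (2*c') := by
        rw [hψq]; ring
      calc ‖Ψ q‖^2 = 2*c' * (c'⁻¹/2 * ‖Ψ q‖^2) := h8.symm
        _ ≤ 2*c' * (ψ q - ψ p) := h7
        _ = (φ q - φ p - ⟪Φ p, q - p⟫) * (2*c') := h9
    have h1 := half u v
    have h2 := half v u
    have e3 : ⟪Φ u, v - u⟫ = -⟪Φ u, u - v⟫ := by
      rw [← inner_neg_right]
      congr 1
      abel
    have e4 : ⟪Φ u - Φ v, u - v⟫ = ⟪Φ u, u - v⟫ - ⟪Φ v, u - v⟫ := inner_sub_left _ _ _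
    have e5 : ‖Φ v - Φ u‖ = ‖Φ u - Φ v‖ := norm_sub_rev _ _
    rw [e3] at h1
    rw [e5] at h1
    have e7 : (φ v - φ u - -⟪Φ u, u - v⟫) * (2*c') + (φ u - φ v - ⟪Φ v, u - v⟫) * (2*c')
        = 2 * (c' * ⟪Φ u - Φ v, u - v⟫) := by
      rw [e4]; ring
    linarith [h1, h2, e7]
  by_contra hcon
  push_neg at hcon
  set s := ⟪Φ u - Φ v, u - v⟫ with hs
  have hs0 : 0 ≤ s := hmono u v
  set a := ‖Φ u - Φ v‖^2 with ha
  have hgap : 0 < a - c * s := by linarith [hcon]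
  have hδ : 0 < (a - c*s)/(2*(s+1)) := by positivity
  have h := key (c + (a - c*s)/(2*(s+1))) (by linarith)
  have hmul : (a - c*s)/(2*(s+1)) * s ≤ (a - c*s)/2 := by
    rw [div_mul_eq_mul_div, div_le_div_iff₀ (by linarith) (by norm_num)]
    nlinarith
  nlinarith [h, hmul]

end quad

set_option maxHeartbeats 1600000 in
theorem stmt_18
    {E F : Type*}
    [NormedAddCommGroup E] [InnerProductSpace ℝ E] [FiniteDimensional ℝ E]
    [NormedAddCommGroup F] [InnerProductSpace ℝ F] [FiniteDimensional ℝ F]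
    (A : E →L[ℝ] F) (b : F) (X : Set E)
    (hXne : X.Nonempty) (hXcl : IsClosed X) (hXcv : Convex ℝ X)
    (f : E → ℝ) (f' : E → E) (Lf : ℝ) (hLf : 0 ≤ Lf)
    (hf : ∀ x, HasGradientAt f (f' x) x)
    (hlip : ∀ u v, ‖f' u - f' v‖ ≤ Lf * ‖u - v‖)
    (ρ μ : ℝ) (hρ : 0 ≤ ρ) (hμ : 0 < μ)
    (K : E → F → E → ℝ)
    (hK : ∀ x y z, K x y z =
      f x + ⟪A x - b, y⟫ + (ρ/2) * ‖A x - b‖^2 + (μ/2) * ‖x - z‖^2)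
    (proj : E → E)
    (hproj : ∀ w, proj w ∈ X ∧ ∀ v ∈ X, ‖w - proj w‖ ≤ ‖w - v‖)
    (hμLf : Lf < μ)
    (τ : ℝ) (hτ0 : 0 < τ) (hτ : τ ≤ 1/(Lf + ρ * ‖A‖^2 + μ))
    (x : E) (hx : x ∈ X) (y : F) (z : E) (g : E)
    (G : E) (hG : G = g + ContinuousLinearMap.adjoint A y
      + ρ • ContinuousLinearMap.adjoint A (A x - b) + μ • (x - z))
    (xp : E) (hxp : xp = proj (x - τ • G))
    (xstar : E) (hxstar : xstar ∈ X ∧ ∀ w ∈ X, K xstar y z ≤ K w y z) :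
    ‖x - xstar‖ ≤ (1/(τ*(μ - Lf))) * ‖x - xp‖ + (1/(μ - Lf)) * ‖g - f' x‖ := by
  set m : ℝ := μ - Lf with hmdef
  have hm0 : 0 < m := by rw [hmdef]; linarith
  set L : ℝ := Lf + ρ * ‖A‖^2 + μ with hLdef
  have hρA : 0 ≤ ρ * ‖A‖^2 := by positivity
  have hL0 : 0 < L := by rw [hLdef]; linarith
  have hmL : m ≤ L := by rw [hmdef, hLdef]; linarith
  have hτL : τ * L ≤ 1 := by
    rw [le_div_iff₀ hL0] at hτ
    simpa using hτ
  have hτm : τ * m ≤ 1 := by nlinarith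
  -- the objective and its gradient
  set Φ : E → E := fun w => f' w + ContinuousLinearMap.adjoint A y
      + ρ • ContinuousLinearMap.adjoint A (A w - b) + μ • (w - z) with hΦdef
  set φ : E → ℝ := fun w =>
      f w + ⟪A w - b, y⟫ + (ρ/2) * ‖A w - b‖^2 + (μ/2) * ‖w - z‖^2 with hφdef
  have hKφ : ∀ w, K w y z = φ w := fun w => hK w y z
  have hg3 : ∀ w : E, HasGradientAt (fun w => (ρ/2) * ‖A w - b‖^2)
      (ρ • ContinuousLinearMap.adjoint A (A w - b)) w := by
    intro w
    have h := hga_const_mul (ρ/2) (hga_normsq_comp A b w)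
    convert h using 1
    rw [smul_smul]
    norm_num
  have hg4 : ∀ c : ℝ, ∀ w : E, ∀ z' : E, HasGradientAt (fun w => (c/2) * ‖w - z'‖^2)
      (c • (w - z')) w := by
    intro c w z'
    have h4' := hga_normsq_comp (ContinuousLinearMap.id ℝ E) z' w
    simp only [ContinuousLinearMap.id_apply, ContinuousLinearMap.adjoint_id] at h4'
    have h := hga_const_mul (c/2) h4'
    convert h using 1
    rw [smul_smul]
    norm_num
  have hgrad : ∀ w, HasGradientAt φ (Φ w) w := by
    intro w
    simp only [hφdef, hΦdef]
    exact hga_add' (hga_add' (hga_add' (hf w) (hga_linear_inner A b y w)) (hg3 w)) (hg4 μ w z)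
  -- difference of gradients
  have hdiff : ∀ u v : E, Φ u - Φ v
      = (f' u - f' v) + ρ • ContinuousLinearMap.adjoint A (A (u - v)) + μ • (u - v) := by
    intro u v
    have e2 : ContinuousLinearMap.adjoint A (A (u - v))
        = ContinuousLinearMap.adjoint A (A u - b) - ContinuousLinearMap.adjoint A (A v - b) := by
      rw [← map_sub]
      congr 1
      rw [map_sub]
      abel
    simp only [hΦdef]
    rw [e2]
    module
  have hmono : ∀ u v : E, m * ‖u - v‖^2 ≤ ⟪Φ u - Φ v, u - v⟫ := by
    intro u v
    rw [hdiff u v, inner_add_left, inner_add_left, real_inner_smul_left, real_inner_smul_left,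
      ContinuousLinearMap.adjoint_inner_left]
    have hA2 : ⟪A (u-v), A (u-v)⟫ = ‖A (u-v)‖^2 := real_inner_self_eq_norm_sq _
    have hd2 : ⟪u-v, u-v⟫ = ‖u-v‖^2 := real_inner_self_eq_norm_sq _
    rw [hA2, hd2]
    have hcs : |⟪f' u - f' v, u - v⟫| ≤ ‖f' u - f' v‖ * ‖u - v‖ := abs_real_inner_le_norm _ _
    have h1 : -(Lf * ‖u - v‖ * ‖u - v‖) ≤ ⟪f' u - f' v, u - v⟫ := by
      have h2 := mul_le_mul_of_nonneg_right (hlip u v) (norm_nonneg (u - v))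
      have h3 := neg_abs_le ⟪f' u - f' v, u - v⟫
      linarith
    have h4 : 0 ≤ ρ * ‖A (u-v)‖^2 := by positivity
    have hsq : ‖u - v‖^2 = ‖u - v‖ * ‖u - v‖ := sq (‖u - v‖) ▸ rfl
    rw [hmdef]
    linarith
  have hup : ∀ u v : E, ⟪Φ u - Φ v, u - v⟫ ≤ L * ‖u - v‖^2 := by
    intro u v
    rw [hdiff u v, inner_add_left, inner_add_left, real_inner_smul_left, real_inner_smul_left,
      ContinuousLinearMap.adjoint_inner_left]
    have hA2 : ⟪A (u-v), A (u-v)⟫ = ‖A (u-v)‖^2 := real_inner_self_eq_norm_sq _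
    have hd2 : ⟪u-v, u-v⟫ = ‖u-v‖^2 := real_inner_self_eq_norm_sq _
    rw [hA2, hd2]
    have hcs : |⟪f' u - f' v, u - v⟫| ≤ ‖f' u - f' v‖ * ‖u - v‖ := abs_real_inner_le_norm _ _
    have h1 : ⟪f' u - f' v, u - v⟫ ≤ Lf * ‖u - v‖ * ‖u - v‖ := by
      have h2 := mul_le_mul_of_nonneg_right (hlip u v) (norm_nonneg (u - v))
      have h3 := le_abs_self ⟪f' u - f' v, u - v⟫
      linarith
    have hAop : ‖A (u - v)‖ ≤ ‖A‖ * ‖u - v‖ := A.le_opNorm (u - v)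
    have h4 : ‖A (u - v)‖^2 ≤ ‖A‖^2 * ‖u - v‖^2 := by
      nlinarith [norm_nonneg (A (u - v)), norm_nonneg (u - v), norm_nonneg A]
    have h5 := mul_le_mul_of_nonneg_left h4 hρ
    have hsq : ‖u - v‖^2 = ‖u - v‖ * ‖u - v‖ := sq (‖u - v‖) ▸ rfl
    have h6 : ρ * (‖A‖^2 * ‖u - v‖^2) = ρ * ‖A‖^2 * ‖u - v‖^2 := by ring
    rw [hLdef]
    linarith [h1, h5, h6]
  -- shifted convex part
  set Ψ : E → E := fun w => Φ w - m • w with hΨdef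
  set ψf : E → ℝ := fun w => φ w - (m/2) * ‖w‖^2 with hψfdef
  have hgradψ : ∀ w, HasGradientAt ψf (Ψ w) w := by
    intro w
    have h := hga_sub' (hgrad w) (hg4 m w 0)
    simp only [sub_zero] at h
    exact h
  have hΨdiff : ∀ u v : E, Ψ u - Ψ v = (Φ u - Φ v) - m • (u - v) := by
    intro u v
    rw [hΨdef]
    simp only []
    module
  have hmonoψ : ∀ u v : E, 0 ≤ ⟪Ψ u - Ψ v, u - v⟫ := by
    intro u v
    rw [hΨdiff, inner_sub_left, real_inner_smul_left, real_inner_self_eq_norm_sq]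
    linarith [hmono u v]
  have hupψ : ∀ u v : E, ⟪Ψ u - Ψ v, u - v⟫ ≤ (L - m) * ‖u - v‖^2 := by
    intro u v
    rw [hΨdiff, inner_sub_left, real_inner_smul_left, real_inner_self_eq_norm_sq]
    have := hup u v
    nlinarith
  have hLm : 0 ≤ L - m := by linarith
  have hcoco := coco ψf Ψ hgradψ (L - m) hLm hmonoψ hupψ x xstar
  -- contraction
  have hcontr : ‖(x - τ • Φ x) - (xstar - τ • Φ xstar)‖ ≤ (1 - τ*m) * ‖x - xstar‖ := by
    have h1τm : 0 ≤ 1 - τ*m := by linarith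
    have hsq : ‖(x - τ • Φ x) - (xstar - τ • Φ xstar)‖^2 ≤ ((1 - τ*m) * ‖x - xstar‖)^2 := by
      have e : (x - τ • Φ x) - (xstar - τ • Φ xstar)
          = (1 - τ*m) • (x - xstar) - τ • (Ψ x - Ψ xstar) := by
        rw [hΨdef]
        simp only []
        module
      rw [e, norm_sub_sq_real, real_inner_smul_left, real_inner_smul_right, norm_smul, norm_smul,
        Real.norm_eq_abs, Real.norm_eq_abs, abs_of_nonneg h1τm, abs_of_pos hτ0]
      have hI0 := hmonoψ x xstar
      have hττ : 0 ≤ τ * ⟪Ψ x - Ψ xstar, x - xstar⟫ := mul_nonneg hτ0.le hI0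
      have hslack : 0 ≤ (τ * ⟪Ψ x - Ψ xstar, x - xstar⟫) * (2 - τ*L - τ*m) := by
        apply mul_nonneg hττ
        linarith
      have hcoco2 : τ^2 * ‖Ψ x - Ψ xstar‖^2 ≤ τ^2 * ((L - m) * ⟪Ψ x - Ψ xstar, x - xstar⟫) :=
        mul_le_mul_of_nonneg_left hcoco (sq_nonneg τ)
      have hcomm : ⟪x - xstar, Ψ x - Ψ xstar⟫ = ⟪Ψ x - Ψ xstar, x - xstar⟫ :=
        real_inner_comm _ _
      rw [hcomm]
      linarith [hcoco2, hslack]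
    have h := Real.sqrt_le_sqrt hsq
    rwa [Real.sqrt_sq (norm_nonneg _), Real.sqrt_sq (mul_nonneg h1τm (norm_nonneg _))] at h
  -- first-order optimality at xstar
  have hVI : ∀ w ∈ X, 0 ≤ ⟪Φ xstar, w - xstar⟫ := by
    intro w hw
    by_contra hneg
    push_neg at hneg
    set a : ℝ := ⟪Φ xstar, w - xstar⟫ with hadef
    set N : ℝ := ‖w - xstar‖^2 with hNdef
    have hN0 : 0 ≤ N := sq_nonneg _
    have hapos : 0 < -a := by linarith
    have hLN : 0 < L * N + 1 := by positivity
    set t : ℝ := min 1 (-a / (L * N + 1)) with htdef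
    have ht0 : 0 < t := lt_min one_pos (div_pos hapos hLN)
    have ht1 : t ≤ 1 := min_le_left _ _
    have ht2 : t ≤ -a / (L * N + 1) := min_le_right _ _
    have hmem : xstar + t • (w - xstar) ∈ X := by
      have hmm := hXcv hxstar.1 hw (by linarith : (0:ℝ) ≤ 1 - t) ht0.le (by ring)
      have e : (1 - t) • xstar + t • w = xstar + t • (w - xstar) := by module
      rwa [e] at hmm
    have hmin := hxstar.2 _ hmem
    rw [hKφ, hKφ] at hmin
    have hub := quad_upper φ Φ hgrad L hup xstar (xstar + t • (w - xstar))
    have e2 : xstar + t • (w - xstar) - xstar = t • (w - xstar) := by abel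
    rw [e2, real_inner_smul_right, norm_smul, Real.norm_eq_abs, abs_of_pos ht0] at hub
    have hq : (t * ‖w - xstar‖)^2 = t^2 * N := by rw [hNdef]; ring
    rw [hq, ← hadef] at hub
    have hkey : L/2 * t * N < -a := by
      have hstep : L/2 * t * N ≤ L/2 * N * (-a / (L*N+1)) := by
        have h := mul_le_mul_of_nonneg_left ht2 (by positivity : (0:ℝ) ≤ L/2 * N)
        calc L/2 * t * N = L/2 * N * t := by ring
          _ ≤ L/2 * N * (-a / (L*N+1)) := h
      have hstep2 : L/2 * N * (-a / (L*N+1)) < -a := by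
        rw [← mul_div_assoc, div_lt_iff₀ hLN]
        have hpos := mul_pos hapos (show (0:ℝ) < L*N/2 + 1 by positivity)
        nlinarith [hpos]
      linarith
    have h9 : a + L/2 * t * N < 0 := by linarith
    have h10 := mul_pos ht0 (neg_pos.2 h9)
    clear_value t a N
    have h11 : 0 ≤ t*a + L/2*(t^2*N) := by linarith [hmin.trans hub]
    nlinarith [h10, h11]
  -- projection characterization
  have hpc : ∀ w : E, ∀ v ∈ X, ⟪w - proj w, v - proj w⟫ ≤ 0 := by
    intro w v hv
    haveI : Nonempty ↑X := ⟨⟨xstar, hxstar.1⟩⟩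
    have hinf : ‖w - proj w‖ = ⨅ u : X, ‖w - u‖ := by
      refine le_antisymm (le_ciInf fun u => (hproj w).2 u u.2) ?_
      exact ciInf_le ⟨0, by rintro r ⟨u, rfl⟩; exact norm_nonneg _⟩ (⟨proj w, (hproj w).1⟩ : X)
    exact (norm_eq_iInf_iff_real_inner_le_zero hXcv (hproj w).1).1 hinf v hv
  -- the three-point estimates
  have hxpX : xp ∈ X := hxp ▸ (hproj (x - τ • G)).1
  have h1 : ⟪(x - τ • G) - xp, xstar - xp⟫ ≤ 0 := by
    rw [hxp]; exact hpc (x - τ • G) xstar hxstar.1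
  have h2 : 0 ≤ ⟪Φ xstar, xp - xstar⟫ := hVI xp hxpX
  have h3 : ‖xp - xstar‖^2 ≤ ⟪(x - τ • G) - (xstar - τ • Φ xstar), xp - xstar⟫ := by
    have e1 : (x - τ • G) - (xstar - τ • Φ xstar)
        = ((x - τ • G) - xp) + (xp - xstar) + τ • Φ xstar := by module
    rw [e1, inner_add_left, inner_add_left, real_inner_smul_left,
      real_inner_self_eq_norm_sq]
    have e2 : ⟪(x - τ • G) - xp, xp - xstar⟫ = -⟪(x - τ • G) - xp, xstar - xp⟫ := by
      rw [← inner_neg_right]; congr 1; abel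
    rw [e2]
    have h2' := mul_nonneg hτ0.le h2
    linarith
  have h4 : ‖xp - xstar‖ ≤ ‖(x - τ • G) - (xstar - τ • Φ xstar)‖ := by
    rcases eq_or_lt_of_le (norm_nonneg (xp - xstar)) with h0 | h0
    · rw [← h0]; exact norm_nonneg _
    · have hcs := real_inner_le_norm ((x - τ • G) - (xstar - τ • Φ xstar)) (xp - xstar)
      have hh := h3.trans hcs
      have hsq : ‖xp - xstar‖^2 = ‖xp - xstar‖ * ‖xp - xstar‖ := by ring
      refine le_of_mul_le_mul_right ?_ h0
      linarith
  have h5 : Φ x - G = f' x - g := by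
    rw [hG]
    simp only [hΦdef]
    module
  have h6 : (x - τ • G) - (xstar - τ • Φ xstar)
      = ((x - τ • Φ x) - (xstar - τ • Φ xstar)) + τ • (Φ x - G) := by module
  have h7 : ‖(x - τ • G) - (xstar - τ • Φ xstar)‖
      ≤ (1 - τ*m) * ‖x - xstar‖ + τ * ‖g - f' x‖ := by
    rw [h6]
    refine (norm_add_le _ _).trans ?_
    have e3 : ‖τ • (Φ x - G)‖ = τ * ‖g - f' x‖ := by
      rw [norm_smul, Real.norm_eq_abs, abs_of_pos hτ0, h5, norm_sub_rev]
    rw [e3]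
    linarith [hcontr]
  have h8 : ‖x - xstar‖ ≤ ‖x - xp‖ + ‖xp - xstar‖ := by
    have e4 : x - xstar = (x - xp) + (xp - xstar) := by abel
    rw [e4]; exact norm_add_le _ _
  have h9 : τ * m * ‖x - xstar‖ ≤ ‖x - xp‖ + τ * ‖g - f' x‖ := by
    have hh := h4.trans h7
    linarith [h8, hh]
  have hτm0 : 0 < τ * m := mul_pos hτ0 hm0
  have h10 := mul_le_mul_of_nonneg_left h9 (le_of_lt (by positivity : (0:ℝ) < 1/(τ*m)))
  have e5 : 1/(τ*m) * (τ*m*‖x - xstar‖) = ‖x - xstar‖ := by field_simp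
  have e6 : 1/(τ*m) * (‖x - xp‖ + τ*‖g - f' x‖)
      = 1/(τ*m)*‖x - xp‖ + (1/m)*‖g - f' x‖ := by
    field_simp
  linarith [h10, e5, e6]
end

section
/- One-step variance bound for the STORM gradient estimator: Let L₀ ≥ 0, σ ≥ 0 and α ∈ ℝ. Fix x, x' ∈ E and v ∈ E. Let (Ω, P) be a probability space and g₁, g₂ : Ω → E measurable maps with ∫ ‖g₁‖² dP < ∞ and ∫ ‖g₂‖² dP < ∞, satisfying ∫ g₁ dP = ∇f(x), ∫ g₂ dP = ∇f(x'), ∫ ‖g₁(ω) − ∇f(x)‖² dP(ω) ≤ σ², and ∫ ‖g₂(ω) − g₁(ω)‖² dP(ω) ≤ L₀²·‖x' − x‖². Then ∫ ‖g₂(ω) + (1 − α)·(v − g₁(ω)) − ∇f(x')‖² dP(ω) ≤ (1 − α)²·‖v − ∇f(x)‖² + 3(L₀² + L_f²)·‖x' − x‖² + 3α²·σ². -/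
open MeasureTheory
open scoped RealInnerProductSpace

theorem stmt_19
    {E : Type*}
    [NormedAddCommGroup E] [InnerProductSpace ℝ E] [FiniteDimensional ℝ E]
    (f : E → ℝ) (f' : E → E) (Lf : ℝ) (hLf : 0 ≤ Lf)
    (hf : ∀ x, HasGradientAt f (f' x) x)
    (hlip : ∀ u v, ‖f' u - f' v‖ ≤ Lf * ‖u - v‖)
    (L₀ σ α : ℝ) (hL₀ : 0 ≤ L₀) (hσ : 0 ≤ σ)
    (x x' v : E)
    {Ω : Type*} [MeasurableSpace Ω] (P : Measure Ω) [IsProbabilityMeasure P]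
    [MeasurableSpace E] [BorelSpace E]
    (g₁ g₂ : Ω → E) (hg₁m : Measurable g₁) (hg₂m : Measurable g₂)
    (hg₁sq : Integrable (fun ω => ‖g₁ ω‖^2) P)
    (hg₂sq : Integrable (fun ω => ‖g₂ ω‖^2) P)
    (hg₁mean : ∫ ω, g₁ ω ∂P = f' x)
    (hg₂mean : ∫ ω, g₂ ω ∂P = f' x')
    (hg₁var : ∫ ω, ‖g₁ ω - f' x‖^2 ∂P ≤ σ^2)
    (hdiff : ∫ ω, ‖g₂ ω - g₁ ω‖^2 ∂P ≤ L₀^2 * ‖x' - x‖^2) :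
    ∫ ω, ‖g₂ ω + (1 - α) • (v - g₁ ω) - f' x'‖^2 ∂P
      ≤ (1 - α)^2 * ‖v - f' x‖^2 + 3*(L₀^2 + Lf^2) * ‖x' - x‖^2 + 3*α^2*σ^2 := by
  set fx := f' x with hfx
  set fx' := f' x' with hfx'
  set a : E := (1 - α) • (v - fx) with ha
  set b : Ω → E := fun ω => (g₂ ω - g₁ ω) - (fx' - fx) + α • (g₁ ω - fx) with hb
  -- L² memberships
  have hg₁L2 : MemLp g₁ 2 P :=
    (memLp_two_iff_integrable_sq_norm hg₁m.aestronglyMeasurable).mpr hg₁sq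
  have hg₂L2 : MemLp g₂ 2 P :=
    (memLp_two_iff_integrable_sq_norm hg₂m.aestronglyMeasurable).mpr hg₂sq
  have hbL2 : MemLp b 2 P :=
    (((hg₂L2.sub hg₁L2).sub (memLp_const _)).add ((hg₁L2.sub (memLp_const _)).const_smul α))
  have hbInt : Integrable b P := hbL2.integrable (by norm_num)
  have hbsqInt : Integrable (fun ω => ‖b ω‖^2) P :=
    (memLp_two_iff_integrable_sq_norm hbL2.aestronglyMeasurable).mp hbL2
  have hdInt : Integrable (fun ω => ‖g₂ ω - g₁ ω‖^2) P :=
    (memLp_two_iff_integrable_sq_norm (hg₂L2.sub hg₁L2).aestronglyMeasurable).mp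
      (hg₂L2.sub hg₁L2)
  have hvInt : Integrable (fun ω => ‖g₁ ω - fx‖^2) P :=
    (memLp_two_iff_integrable_sq_norm (hg₁L2.sub (memLp_const _)).aestronglyMeasurable).mp
      (hg₁L2.sub (memLp_const _))
  have hg₁Int : Integrable g₁ P := hg₁L2.integrable (by norm_num)
  have hg₂Int : Integrable g₂ P := hg₂L2.integrable (by norm_num)
  -- mean of b is zero
  have hbmean : ∫ ω, b ω ∂P = 0 := by
    have hI1 : Integrable (fun ω => (g₂ ω - g₁ ω) - (fx' - fx)) P :=
      (hg₂Int.sub hg₁Int).sub (integrable_const _)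
    have hI2 : Integrable (fun ω => α • (g₁ ω - fx)) P :=
      (hg₁Int.sub (integrable_const _)).smul α
    have : ∫ ω, b ω ∂P =
        ((∫ ω, g₂ ω ∂P) - (∫ ω, g₁ ω ∂P) - (fx' - fx)) + α • ((∫ ω, g₁ ω ∂P) - fx) := by
      rw [show (∫ ω, b ω ∂P) = ∫ ω, ((g₂ ω - g₁ ω) - (fx' - fx)) + α • (g₁ ω - fx) ∂P from rfl,
        integral_add hI1 hI2,
        integral_sub (show Integrable (fun ω => g₂ ω - g₁ ω) P from hg₂Int.sub hg₁Int) (integrable_const _),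
        integral_sub hg₂Int hg₁Int, integral_smul,
        integral_sub hg₁Int (integrable_const _), integral_const]
      simp
    rw [this, hg₁mean, hg₂mean]
    simp
  -- pointwise decomposition
  have key : ∀ ω, ‖g₂ ω + (1 - α) • (v - g₁ ω) - fx'‖^2
      = ‖a‖^2 + 2 * ⟪a, b ω⟫ + ‖b ω‖^2 := by
    intro ω
    have h : g₂ ω + (1 - α) • (v - g₁ ω) - fx' = a + b ω := by
      simp only [ha, hb]
      module
    rw [h, norm_add_sq_real]
  have hinnerInt : Integrable (fun ω => ⟪a, b ω⟫) P := hbInt.const_inner a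
  have hmain : ∫ ω, ‖g₂ ω + (1 - α) • (v - g₁ ω) - fx'‖^2 ∂P
      = ‖a‖^2 + ∫ ω, ‖b ω‖^2 ∂P := by
    calc ∫ ω, ‖g₂ ω + (1 - α) • (v - g₁ ω) - fx'‖^2 ∂P
        = ∫ ω, (‖a‖^2 + 2 * ⟪a, b ω⟫ + ‖b ω‖^2) ∂P := by
          exact integral_congr_ae (Filter.Eventually.of_forall key)
      _ = ‖a‖^2 + ∫ ω, ‖b ω‖^2 ∂P := by
          have hJ1 : Integrable (fun ω => ‖a‖^2 + 2 * ⟪a, b ω⟫) P :=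
            (integrable_const _).add (hinnerInt.const_mul 2)
          have hJ2 : Integrable (fun ω => 2 * ⟪a, b ω⟫) P := hinnerInt.const_mul 2
          rw [integral_add hJ1 hbsqInt, integral_add (integrable_const _) hJ2,
            integral_const, integral_const_mul, integral_inner hbInt, hbmean]
          simp
  -- bound ∫ ‖b‖²
  have hptw : ∀ ω, ‖b ω‖^2
      ≤ 3 * ‖g₂ ω - g₁ ω‖^2 + 3 * ‖fx' - fx‖^2 + 3 * α^2 * ‖g₁ ω - fx‖^2 := by
    intro ω
    have h1 : ‖b ω‖ ≤ ‖g₂ ω - g₁ ω‖ + ‖fx' - fx‖ + |α| * ‖g₁ ω - fx‖ := by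
      calc ‖b ω‖ ≤ ‖(g₂ ω - g₁ ω) - (fx' - fx)‖ + ‖α • (g₁ ω - fx)‖ := norm_add_le _ _
        _ ≤ ‖g₂ ω - g₁ ω‖ + ‖fx' - fx‖ + ‖α • (g₁ ω - fx)‖ := by
            gcongr; exact norm_sub_le _ _
        _ = ‖g₂ ω - g₁ ω‖ + ‖fx' - fx‖ + |α| * ‖g₁ ω - fx‖ := by
            rw [norm_smul, Real.norm_eq_abs]
    have hnb : 0 ≤ ‖b ω‖ := norm_nonneg _
    have h2 : |α|^2 = α^2 := sq_abs α
    nlinarith [norm_nonneg (g₂ ω - g₁ ω), norm_nonneg (fx' - fx), norm_nonneg (g₁ ω - fx),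
      abs_nonneg α, sq_nonneg (‖g₂ ω - g₁ ω‖ - ‖fx' - fx‖),
      sq_nonneg (‖g₂ ω - g₁ ω‖ - |α| * ‖g₁ ω - fx‖),
      sq_nonneg (‖fx' - fx‖ - |α| * ‖g₁ ω - fx‖)]
  have hbsq_bound : ∫ ω, ‖b ω‖^2 ∂P
      ≤ 3 * (L₀^2 * ‖x' - x‖^2) + 3 * ‖fx' - fx‖^2 + 3 * α^2 * σ^2 := by
    have hle : ∫ ω, ‖b ω‖^2 ∂P
        ≤ ∫ ω, (3 * ‖g₂ ω - g₁ ω‖^2 + 3 * ‖fx' - fx‖^2 + 3 * α^2 * ‖g₁ ω - fx‖^2) ∂P := by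
      refine integral_mono hbsqInt ?_ hptw
      exact ((hdInt.const_mul 3).add (integrable_const _)).add (hvInt.const_mul (3 * α^2))
    have heq : ∫ ω, (3 * ‖g₂ ω - g₁ ω‖^2 + 3 * ‖fx' - fx‖^2 + 3 * α^2 * ‖g₁ ω - fx‖^2) ∂P
        = 3 * ∫ ω, ‖g₂ ω - g₁ ω‖^2 ∂P + 3 * ‖fx' - fx‖^2
          + 3 * α^2 * ∫ ω, ‖g₁ ω - fx‖^2 ∂P := by
      have hK1 : Integrable (fun ω => 3 * ‖g₂ ω - g₁ ω‖^2 + 3 * ‖fx' - fx‖^2) P :=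
        (hdInt.const_mul 3).add (integrable_const _)
      have hK2 : Integrable (fun ω => 3 * α^2 * ‖g₁ ω - fx‖^2) P := hvInt.const_mul (3 * α^2)
      rw [integral_add hK1 hK2, integral_add (hdInt.const_mul 3) (integrable_const _),
        integral_const_mul, integral_const_mul, integral_const_mul, integral_const]
      simp
    refine hle.trans ?_
    rw [heq]
    have h3 : 3 * α^2 * ∫ ω, ‖g₁ ω - fx‖^2 ∂P ≤ 3 * α^2 * σ^2 := by
      apply mul_le_mul_of_nonneg_left hg₁var; positivity
    linarith [mul_le_mul_of_nonneg_left hdiff (by norm_num : (0:ℝ) ≤ 3)]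
  -- Lipschitz bound on the gradient term
  have hgrad : ‖fx' - fx‖^2 ≤ Lf^2 * ‖x' - x‖^2 := by
    have := hlip x' x
    nlinarith [norm_nonneg (fx' - fx), norm_nonneg (x' - x)]
  have hanorm : ‖a‖^2 = (1 - α)^2 * ‖v - fx‖^2 := by
    rw [ha, norm_smul, Real.norm_eq_abs, mul_pow, sq_abs]
  rw [hmain, hanorm]
  nlinarith [hbsq_bound, hgrad]
end
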